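/- arXiv:0810.1474 — 4 statements merged into one kernel-verified Lean document; each statement's English description precedes it below -/
import Mathlib

section
/- Let F : [α,β] → C^1([0,1],[0,1]) be a family of l-modal maps (continuous for the C^1 topology, each f_γ a C^1 l-modal map with laps I_1(γ),…,I_{l+1}(γ)), let y : [α,β] → (0,1) be continuous, let n ≥ 1, and let S = S_0 S_1 ⋯ S_{n−1} be a word over the lap symbols {I_1,…,I_{l+1}}. For γ ∈ [α,β] call x ∈ [0,1] a pullback of y(γ) of type S if f_γ^n(x) = y(γ) and f_γ^k(x) ∈ I_{S_k}(γ) for every 0 ≤ k < n. Then: (i) for each γ there is at most one pullback x_γ of y(γ) of type S; (ii) the set D ⊆ [α,β] of parameters γ for which x_γ exists is open in [α,β]; (iii) the map γ ↦ x_γ is continuous on D. -/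
open Set Metric

noncomputable section

/-- Endpoints of the laps of an `l`-modal map with turning points `c`. -/
def lapPts (l : ℕ) (c : Fin l → ℝ) (i : Fin (l + 2)) : ℝ :=
  if h0 : (i : ℕ) = 0 then 0
  else if hl : (i : ℕ) = l + 1 then 1
  else c ⟨(i : ℕ) - 1, by have := i.isLt; omega⟩

/-- The `i`-th (closed) lap of an `l`-modal map with turning points `c`. -/
def lap (l : ℕ) (c : Fin l → ℝ) (i : Fin (l + 1)) : Set ℝ :=
  Icc (lapPts l c i.castSucc) (lapPts l c i.succ)

/-- The `j`-th lap as in the paper: `I_1 = [0,c_1)`, `I_j = (c_{j-1},c_j)` and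
`I_{l+1} = (c_l,1]`. -/
def openLap (l : ℕ) (c : Fin l → ℝ) (j : Fin (l + 1)) : Set ℝ :=
  Ioo (lapPts l c j.castSucc) (lapPts l c j.succ)
    ∪ (if (j : ℕ) = 0 then {0} else (∅ : Set ℝ))
    ∪ (if (j : ℕ) = l then {1} else (∅ : Set ℝ))

/-- `f` is an `l`-modal map of `[0,1]` with turning points `c 0 < … < c (l-1)`. -/
def IsLModal (l : ℕ) (f : ℝ → ℝ) (c : Fin l → ℝ) : Prop :=
  StrictMono c ∧ (∀ i, c i ∈ Ioo (0:ℝ) 1) ∧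
  MapsTo f (Icc 0 1) (Icc 0 1) ∧
  f 0 ∈ ({0, 1} : Set ℝ) ∧ f 1 ∈ ({0, 1} : Set ℝ) ∧
  ∃ s : Fin (l + 1) → Bool,
    (∀ i : Fin l, s i.castSucc ≠ s i.succ) ∧
    (∀ i, if s i then StrictMonoOn f (lap l c i) else StrictAntiOn f (lap l c i))

/-- `f` is a `C¹` `l`-modal map with turning points `c`. -/
def IsC1LModal (l : ℕ) (f : ℝ → ℝ) (c : Fin l → ℝ) : Prop :=
  IsLModal l f c ∧ ContDiff ℝ 1 f ∧
  ∀ x ∈ Icc (0:ℝ) 1, (∀ i, x ≠ c i) → deriv f x ≠ 0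

/-- Continuity of the family `γ ↦ F γ` on `[a,b]` with respect to the `C¹` topology. -/
def C1FamilyOn (F : ℝ → ℝ → ℝ) (a b : ℝ) : Prop :=
  ∀ γ₀ ∈ Icc a b, ∀ ε > (0:ℝ), ∃ δ > (0:ℝ), ∀ γ ∈ Icc a b, |γ - γ₀| < δ →
    ∀ x ∈ Icc (0:ℝ) 1, |F γ x - F γ₀ x| < ε ∧ |deriv (F γ) x - deriv (F γ₀) x| < ε

/-- `x` is a pullback of `y γ` of the combinatorial type `S` under `f_γ = F γ`:
`f_γ^n x = y γ` and `f_γ^k x` lies in the lap `I_{S k}` for every `k < n`. -/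
def PullbackOfType (l : ℕ) (F : ℝ → ℝ → ℝ) (c : ℝ → Fin l → ℝ) (y : ℝ → ℝ)
    (n : ℕ) (S : Fin n → Fin (l + 1)) (γ x : ℝ) : Prop :=
  (F γ)^[n] x = y γ ∧ ∀ k : Fin n, (F γ)^[(k : ℕ)] x ∈ openLap l (c γ) (S k)

/-!
Each `f_γ` is injective on every closed lap, so `f_γ^n` is injective on the points following the
itinerary `S`; this gives uniqueness. The turning points depend continuously on `γ`: near a
turning point `c` of `f_{γ₀}` the value at `c` strictly beats the values at `c ± r`, this persists
for `f_γ` with `γ` close to `γ₀`, so `f_γ` has a local extremum, hence a critical point, hence a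
turning point, in `(c - r, c + r)`; counting turning points shows it is the right one.
Consequently, following `S` through the open laps is an open condition on `(γ, x)`. On a small
interval `J ∋ x₀` around a pullback for `γ₀`, the map `f_{γ₀}^n` is continuous and injective, so
`y γ₀` lies strictly between its values at the endpoints of `J`. This persists for `γ` near `γ₀`,
and the intermediate value theorem produces a pullback for `γ` in `J`.
-/

open Filter Topology

section Laps

variable {l : ℕ} {c : Fin l → ℝ}

lemma lapPts_mem_Icc (hc01 : ∀ i, c i ∈ Ioo (0:ℝ) 1) (j : Fin (l + 2)) :
    lapPts l c j ∈ Icc (0:ℝ) 1 := by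
  unfold lapPts
  split_ifs
  · exact ⟨le_rfl, zero_le_one⟩
  · exact ⟨zero_le_one, le_rfl⟩
  · exact Ioo_subset_Icc_self (hc01 _)

lemma lapPts_castSucc_succ (i : Fin l) : lapPts l c i.castSucc.succ = c i := by
  simp [lapPts, i.isLt.ne]

lemma lapPts_succ_castSucc (i : Fin l) : lapPts l c i.succ.castSucc = c i := by
  rw [← Fin.succ_castSucc, lapPts_castSucc_succ]

lemma lapPts_strictMono (hc : StrictMono c) (hc01 : ∀ i, c i ∈ Ioo (0:ℝ) 1) :
    StrictMono (lapPts l c) := by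
  intro i j hij
  have := Fin.lt_def.1 hij
  unfold lapPts
  split_ifs <;> first
    | omega | exact zero_lt_one | exact (hc01 _).1 | exact (hc01 _).2
    | exact hc (Fin.mk_lt_mk.2 (by omega))

lemma ContinuousOn.lapPts {s : Set ℝ} {c : ℝ → Fin l → ℝ} (hc : ContinuousOn c s)
    (j : Fin (l + 2)) : ContinuousOn (fun γ => _root_.lapPts l (c γ) j) s := by
  unfold _root_.lapPts
  split_ifs
  · exact continuousOn_const
  · exact continuousOn_const
  · exact continuousOn_pi.1 hc _

lemma mem_Ioo_of_mem_openLap {x : ℝ} {j : Fin (l + 1)} (hx : x ∈ openLap l c j)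
    (h0 : x ≠ 0) (h1 : x ≠ 1) : x ∈ Ioo (lapPts l c j.castSucc) (lapPts l c j.succ) := by
  rcases hx with (hx | hx) | hx
  · exact hx
  · split_ifs at hx <;> simp_all
  · split_ifs at hx <;> simp_all

lemma IsLModal.injOn_lap {f : ℝ → ℝ} (hf : IsLModal l f c) (j : Fin (l + 1)) :
    InjOn f (lap l c j) := by
  obtain ⟨-, -, -, -, -, s, -, hmono⟩ := hf
  have := hmono j
  split_ifs at this
  · exact this.injOn
  · exact this.injOn

end Laps

lemma injOn_iterate_of_injOn {α : Type*} {f : α → α} :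
    ∀ {n : ℕ} (s : Fin n → Set α), (∀ k, InjOn f (s k)) →
      InjOn f^[n] {x | ∀ k : Fin n, f^[k] x ∈ s k}
  | 0, _, _ => Function.injective_id.injOn
  | n + 1, s, hs => by
    intro x₁ hx₁ x₂ hx₂ h
    have htail : ∀ {x}, (∀ k : Fin (n + 1), f^[k] x ∈ s k) →
        ∀ k : Fin n, f^[k] (f x) ∈ s k.succ := fun hx k => by
      simpa only [Fin.val_succ, Function.iterate_succ_apply] using hx k.succ
    refine hs 0 (hx₁ 0) (hx₂ 0) ?_
    exact injOn_iterate_of_injOn (fun k => s k.succ) (fun _ => hs _) (htail hx₁) (htail hx₂) h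

section Pullback

variable {l n : ℕ} {F : ℝ → ℝ → ℝ} {c : ℝ → Fin l → ℝ} {y : ℝ → ℝ} {S : Fin n → Fin (l + 1)}
  {γ x : ℝ}

lemma PullbackOfType.iterate_mem_Ioo (hpb : PullbackOfType l F c y n S γ x)
    (hf : IsLModal l (F γ) (c γ)) (hy : y γ ∈ Ioo (0:ℝ) 1) (k : Fin n) :
    (F γ)^[k] x ∈ Ioo (lapPts l (c γ) (S k).castSucc) (lapPts l (c γ) (S k).succ) := by
  obtain ⟨-, -, -, h0, h1, -⟩ := hf
  have hbdry : MapsTo (F γ) {0, 1} {0, 1} := by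
    rintro z (rfl | rfl)
    exacts [h0, h1]
  -- `{0, 1}` is forward invariant and `y γ ∉ {0, 1}`, so the orbit never visits `{0, 1}`.
  have hk : (F γ)^[k] x ∉ ({0, 1} : Set ℝ) := fun hmem => by
    have := hbdry.iterate (n - k) hmem
    rw [← Function.iterate_add_apply, Nat.sub_add_cancel k.isLt.le, hpb.1] at this
    simp only [mem_insert_iff, mem_singleton_iff] at this
    rcases this with h | h <;> simp [h] at hy
  exact mem_Ioo_of_mem_openLap (hpb.2 k) (fun h => hk (Or.inl h)) (fun h => hk (Or.inr h))

lemma PullbackOfType.mem_Ioo_zero_one (hpb : PullbackOfType l F c y n S γ x)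
    (hf : IsLModal l (F γ) (c γ)) (hy : y γ ∈ Ioo (0:ℝ) 1) : x ∈ Ioo (0:ℝ) 1 := by
  cases n with
  | zero => simpa [← hpb.1] using hy
  | succ n =>
    have hx := hpb.iterate_mem_Ioo hf hy 0
    rw [Fin.val_zero, Function.iterate_zero_apply] at hx
    exact ⟨(lapPts_mem_Icc hf.2.1 _).1.trans_lt hx.1, hx.2.trans_le (lapPts_mem_Icc hf.2.1 _).2⟩

lemma PullbackOfType.unique {x₁ x₂ : ℝ} (h₁ : PullbackOfType l F c y n S γ x₁)
    (h₂ : PullbackOfType l F c y n S γ x₂) (hf : IsLModal l (F γ) (c γ))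
    (hy : y γ ∈ Ioo (0:ℝ) 1) : x₁ = x₂ :=
  injOn_iterate_of_injOn (fun k => lap l (c γ) (S k)) (fun _ => hf.injOn_lap _)
    (fun k => Ioo_subset_Icc_self (h₁.iterate_mem_Ioo hf hy k))
    (fun k => Ioo_subset_Icc_self (h₂.iterate_mem_Ioo hf hy k)) (h₁.1.trans h₂.1.symm)

end Pullback

lemma C1FamilyOn.continuousOn_uncurry {F : ℝ → ℝ → ℝ} {a b : ℝ} (hfam : C1FamilyOn F a b)
    (hcont : ∀ γ ∈ Icc a b, Continuous (F γ)) :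
    ContinuousOn (Function.uncurry F) (Icc a b ×ˢ Icc 0 1) := by
  rintro ⟨γ₀, x₀⟩ ⟨hγ₀, -⟩
  refine Metric.continuousWithinAt_iff.2 fun ε hε => ?_
  obtain ⟨δ₁, hδ₁, hF⟩ := hfam γ₀ hγ₀ (ε / 2) (half_pos hε)
  obtain ⟨δ₂, hδ₂, hF₀⟩ := Metric.continuous_iff.1 (hcont γ₀ hγ₀) x₀ (ε / 2) (half_pos hε)
  refine ⟨min δ₁ δ₂, lt_min hδ₁ hδ₂, fun ⟨γ, x⟩ ⟨hγ, hx⟩ hd => ?_⟩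
  rw [Prod.dist_eq, max_lt_iff, lt_min_iff, lt_min_iff] at hd
  calc dist (F γ x) (F γ₀ x₀) ≤ dist (F γ x) (F γ₀ x) + dist (F γ₀ x) (F γ₀ x₀) :=
        dist_triangle _ _ _
    _ < ε / 2 + ε / 2 := add_lt_add ((hF γ hγ hd.1.1 x hx).1) (hF₀ x hd.2.2)
    _ = ε := add_halves ε

lemma ContinuousOn.uncurry_iterate {α β : Type*} [TopologicalSpace α] [TopologicalSpace β]
    {F : α → β → β} {s : Set α} {t : Set β} (hF : ContinuousOn (Function.uncurry F) (s ×ˢ t))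
    (hmaps : ∀ γ ∈ s, MapsTo (F γ) t t) (k : ℕ) :
    ContinuousOn (fun p : α × β => (F p.1)^[k] p.2) (s ×ˢ t) := by
  induction k with
  | zero => exact continuousOn_snd
  | succ k ih =>
    simp_rw [Function.iterate_succ_apply']
    exact hF.comp (continuousOn_fst.prodMk ih) fun p hp => ⟨hp.1, (hmaps p.1 hp.1).iterate k hp.2⟩

lemma exists_isLocalExtr_Ioo_of_mul_pos {f : ℝ → ℝ} {u t v : ℝ} (hut : u < t) (htv : t < v)
    (hf : ContinuousOn f (Icc u v)) (h : 0 < (f u - f t) * (f v - f t)) :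
    ∃ m ∈ Ioo u v, IsLocalExtr f m := by
  have huv : (Icc u v).Nonempty := nonempty_Icc.2 (hut.trans htv).le
  have ht : t ∈ Icc u v := ⟨hut.le, htv.le⟩
  have interior_extr : ∀ m ∈ Icc u v, IsExtrOn f (Icc u v) m → f m ≠ f u → f m ≠ f v →
      ∃ m ∈ Ioo u v, IsLocalExtr f m := fun m hm hext hmu hmv =>
    have hm' : m ∈ Ioo u v :=
      ⟨hm.1.lt_of_ne (ne_of_apply_ne f hmu).symm, hm.2.lt_of_ne (ne_of_apply_ne f hmv)⟩
    ⟨m, hm', hext.isLocalExtr (Icc_mem_nhds hm'.1 hm'.2)⟩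
  rcases mul_pos_iff.1 h with ⟨hu, hv⟩ | ⟨hu, hv⟩
  · obtain ⟨m, hm, hmin⟩ := isCompact_Icc.exists_isMinOn huv hf
    have hmt := isMinOn_iff.1 hmin t ht
    exact interior_extr m hm hmin.isExtr (by linarith) (by linarith)
  · obtain ⟨m, hm, hmax⟩ := isCompact_Icc.exists_isMaxOn huv hf
    have hmt := isMaxOn_iff.1 hmax t ht
    exact interior_extr m hm hmax.isExtr (by linarith) (by linarith)

section TurningPoints

variable {l : ℕ} {f : ℝ → ℝ} {c : Fin l → ℝ}

lemma IsLModal.mul_sub_pos (hf : IsLModal l f c) (i : Fin l) {u v : ℝ}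
    (hu : lapPts l c i.castSucc.castSucc ≤ u) (huc : u < c i) (hcv : c i < v)
    (hv : v ≤ lapPts l c i.succ.succ) : 0 < (f u - f (c i)) * (f v - f (c i)) := by
  obtain ⟨-, -, -, -, -, s, halt, hmono⟩ := hf
  have hu' : u ∈ lap l c i.castSucc := ⟨hu, (lapPts_castSucc_succ i).ge.trans' huc.le⟩
  have hcu : c i ∈ lap l c i.castSucc := ⟨hu.trans huc.le, (lapPts_castSucc_succ i).ge⟩
  have hcv' : c i ∈ lap l c i.succ := ⟨(lapPts_succ_castSucc i).le, hcv.le.trans hv⟩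
  have hv' : v ∈ lap l c i.succ := ⟨(lapPts_succ_castSucc i).trans_le hcv.le, hv⟩
  have h₁ := hmono i.castSucc
  have h₂ := hmono i.succ
  have hne := halt i
  rcases hs₁ : s i.castSucc <;> rcases hs₂ : s i.succ <;>
    simp only [hs₁, hs₂, Bool.false_eq_true, if_false, if_true, ne_eq, not_true_eq_false,
      reduceCtorEq, not_false_eq_true] at h₁ h₂ hne
  · exact mul_pos (sub_pos.2 (h₁ hu' hcu huc)) (sub_pos.2 (h₂ hcv' hv' hcv))
  · exact mul_pos_of_neg_of_neg (sub_neg.2 (h₁ hu' hcu huc)) (sub_neg.2 (h₂ hcv' hv' hcv))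

lemma IsC1LModal.exists_turningPoint_mem_Ioo (hf : IsC1LModal l f c) {u t v : ℝ} (hut : u < t)
    (htv : t < v) (hu : 0 ≤ u) (hv : v ≤ 1) (h : 0 < (f u - f t) * (f v - f t)) :
    ∃ j, c j ∈ Ioo u v := by
  obtain ⟨m, hm, hext⟩ :=
    exists_isLocalExtr_Ioo_of_mul_pos hut htv hf.2.1.continuous.continuousOn h
  by_contra! hno
  exact hf.2.2 m ⟨hu.trans hm.1.le, hm.2.le.trans hv⟩ (fun j hj => hno j (hj ▸ hm))
    hext.deriv_eq_zero

end TurningPoints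

lemma StrictMono.mem_of_forall_exists_mem {ι α : Type*} [LinearOrder ι] [WellFoundedLT ι]
    [WellFoundedGT ι] [Preorder α] {c : ι → α} (hc : StrictMono c) {I : ι → Set α}
    (hI : ∀ i i', i < i' → ∀ x ∈ I i, ∀ x' ∈ I i', x < x') (h : ∀ i, ∃ j, c j ∈ I i) (i : ι) :
    c i ∈ I i := by
  choose j hj using h
  have hj_mono : StrictMono j := fun i i' hii' => hc.lt_iff_lt.1 (hI i i' hii' _ (hj i) _ (hj i'))
  simpa [le_antisymm hj_mono.apply_le hj_mono.le_apply] using hj i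

theorem C1FamilyOn.continuousOn_turningPoints {l : ℕ} {F : ℝ → ℝ → ℝ} {c : ℝ → Fin l → ℝ}
    {a b : ℝ} (hfam : C1FamilyOn F a b) (hmodal : ∀ γ ∈ Icc a b, IsC1LModal l (F γ) (c γ)) :
    ContinuousOn c (Icc a b) := by
  have hF := hfam.continuousOn_uncurry fun γ hγ => (hmodal γ hγ).2.1.continuous
  intro γ₀ hγ₀
  obtain ⟨⟨hc, hc01, -⟩, -⟩ := hmodal γ₀ hγ₀
  set w := lapPts l (c γ₀)
  have hw : StrictMono w := lapPts_strictMono hc hc01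
  have hw01 : ∀ j, w j ∈ Icc (0:ℝ) 1 := lapPts_mem_Icc hc01
  have hsmall : ∀ {p q : ℝ}, p < q → ∀ᶠ r in 𝓝 (0:ℝ), p + r < q - r := fun hpq =>
    (continuousAt_const.add continuousAt_id).eventually_lt (continuousAt_const.sub continuousAt_id)
      (by simpa using hpq)
  refine continuousWithinAt_pi.2 fun i₀ => Metric.tendsto_nhds.2 fun ε hε => ?_
  obtain ⟨r, hr0, hrε, hlap, hsep⟩ : ∃ r, 0 < r ∧ r < ε ∧
      (∀ i, w i.castSucc.castSucc + r < c γ₀ i - r ∧ c γ₀ i + r < w i.succ.succ - r) ∧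
      ∀ i i', i < i' → c γ₀ i + r < c γ₀ i' - r := by
    refine (eventually_mem_nhdsWithin.and (nhdsWithin_le_nhds ((eventually_lt_nhds hε).and
      ((eventually_all.2 fun i => (hsmall ?_).and (hsmall ?_)).and
        (eventually_all.2 fun i => eventually_all.2 fun i' =>
          eventually_imp_distrib_left.2 fun h => hsmall (hc h)))))).exists (f := 𝓝[>] (0:ℝ))
    · exact lapPts_castSucc_succ (c := c γ₀) i ▸ hw Fin.castSucc_lt_succ
    · exact lapPts_succ_castSucc (c := c γ₀) i ▸ hw Fin.castSucc_lt_succ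
  have hlo : ∀ i, 0 ≤ c γ₀ i - r := fun i => by
    linarith [(hlap i).1, (hw01 i.castSucc.castSucc).1]
  have hhi : ∀ i, c γ₀ i + r ≤ 1 := fun i => by
    linarith [(hlap i).2, (hw01 i.succ.succ).2]
  have hsign : ∀ᶠ γ in 𝓝[Icc a b] γ₀, γ ∈ Icc a b ∧ ∀ i,
      0 < (F γ (c γ₀ i - r) - F γ (c γ₀ i)) * (F γ (c γ₀ i + r) - F γ (c γ₀ i)) := by
    refine eventually_mem_nhdsWithin.and (eventually_all.2 fun i => ?_)
    have hcont : ∀ x ∈ Icc (0:ℝ) 1, ContinuousWithinAt (fun γ => F γ x) (Icc a b) γ₀ :=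
      fun x hx => hF.uncurry_right x hx γ₀ hγ₀
    have hci := Ioo_subset_Icc_self (hc01 i)
    refine Filter.Tendsto.eventually_const_lt ?_
      (((hcont _ ⟨hlo i, by linarith [hhi i]⟩).sub (hcont _ hci)).mul
        ((hcont _ ⟨by linarith [hlo i], hhi i⟩).sub (hcont _ hci)))
    exact (hmodal γ₀ hγ₀).1.mul_sub_pos i (by linarith [(hlap i).1]) (by linarith) (by linarith)
      (by linarith [(hlap i).2])
  filter_upwards [hsign] with γ ⟨hγ, hpos⟩
  have hexists : ∀ i, ∃ j, c γ j ∈ Ioo (c γ₀ i - r) (c γ₀ i + r) := fun i =>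
    (hmodal γ hγ).exists_turningPoint_mem_Ioo (by linarith) (by linarith) (hlo i) (hhi i) (hpos i)
  have hi₀ := (hmodal γ hγ).1.1.mem_of_forall_exists_mem
    (fun i i' h x hx x' hx' => by linarith [hx.2, hx'.1, hsep i i' h]) hexists i₀
  rw [Real.dist_eq, abs_lt]
  constructor <;> linarith [hi₀.1, hi₀.2]

lemma ContinuousOn.apply_mem_uIoo_of_injOn {α δ : Type*} [ConditionallyCompleteLinearOrder α]
    [TopologicalSpace α] [OrderTopology α] [DenselyOrdered α] [LinearOrder δ] [TopologicalSpace δ]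
    [OrderClosedTopology δ] {f : α → δ} {p q x : α} (hf_c : ContinuousOn f (Icc p q))
    (hf_i : InjOn f (Icc p q)) (hx : x ∈ Ioo p q) : f x ∈ uIoo (f p) (f q) := by
  have hpq := hx.1.trans hx.2
  have hp : p ∈ Icc p q := left_mem_Icc.2 hpq.le
  have hq : q ∈ Icc p q := right_mem_Icc.2 hpq.le
  have hx' := Ioo_subset_Icc_self hx
  rcases hf_c.strictMonoOn_of_injOn_Icc' hpq.le hf_i with h | h
  · rw [uIoo_of_lt (h hp hq hpq)]
    exact ⟨h hp hx' hx.1, h hx' hq hx.2⟩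
  · rw [uIoo_of_gt (h hp hq hpq)]
    exact ⟨h hx' hq hx.2, h hp hx' hx.1⟩

lemma C1FamilyOn.continuousOn_iterate {l : ℕ} {F : ℝ → ℝ → ℝ} {c : ℝ → Fin l → ℝ} {a b : ℝ}
    (hfam : C1FamilyOn F a b) (hmodal : ∀ γ ∈ Icc a b, IsC1LModal l (F γ) (c γ)) (k : ℕ) :
    ContinuousOn (fun p : ℝ × ℝ => (F p.1)^[k] p.2) (Icc a b ×ˢ Icc 0 1) :=
  (hfam.continuousOn_uncurry fun γ hγ => (hmodal γ hγ).2.1.continuous).uncurry_iterate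
    (fun γ hγ => (hmodal γ hγ).1.2.2.1) k

theorem PullbackOfType.eventually_iterate_mem_Ioo {l n : ℕ} {F : ℝ → ℝ → ℝ}
    {c : ℝ → Fin l → ℝ} {a b : ℝ} {y : ℝ → ℝ} {S : Fin n → Fin (l + 1)} {γ₀ x₀ : ℝ}
    (hx₀ : PullbackOfType l F c y n S γ₀ x₀) (hfam : C1FamilyOn F a b)
    (hmodal : ∀ γ ∈ Icc a b, IsC1LModal l (F γ) (c γ)) (hγ₀ : γ₀ ∈ Icc a b)
    (hy₀ : y γ₀ ∈ Ioo (0:ℝ) 1) :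
    ∀ᶠ p in 𝓝[Icc a b ×ˢ Icc 0 1] (γ₀, x₀), p ∈ Icc a b ×ˢ Icc 0 1 ∧
      ∀ k : Fin n, (F p.1)^[k] p.2 ∈
        Ioo (lapPts l (c p.1) (S k).castSucc) (lapPts l (c p.1) (S k).succ) := by
  have hmem : (γ₀, x₀) ∈ Icc a b ×ˢ Icc (0:ℝ) 1 :=
    ⟨hγ₀, Ioo_subset_Icc_self (hx₀.mem_Ioo_zero_one (hmodal γ₀ hγ₀).1 hy₀)⟩
  have hlap : ∀ j, ContinuousWithinAt (fun p : ℝ × ℝ => lapPts l (c p.1) j)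
      (Icc a b ×ˢ Icc 0 1) (γ₀, x₀) := fun j =>
    ((hfam.continuousOn_turningPoints hmodal).lapPts j).comp continuousOn_fst
      (fun _ hp => hp.1) _ hmem
  refine eventually_mem_nhdsWithin.and (eventually_all.2 fun k => ?_)
  have hΨ := hfam.continuousOn_iterate hmodal k _ hmem
  have hk := hx₀.iterate_mem_Ioo (hmodal γ₀ hγ₀).1 hy₀ k
  exact ((hlap _).eventually_lt hΨ hk.1).and (hΨ.eventually_lt (hlap _) hk.2)

theorem PullbackOfType.eventually_exists_dist_lt {l n : ℕ} {F : ℝ → ℝ → ℝ}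
    {c : ℝ → Fin l → ℝ} {a b : ℝ} {y : ℝ → ℝ} {S : Fin n → Fin (l + 1)} {γ₀ x₀ : ℝ}
    (hx₀ : PullbackOfType l F c y n S γ₀ x₀) (hfam : C1FamilyOn F a b)
    (hmodal : ∀ γ ∈ Icc a b, IsC1LModal l (F γ) (c γ)) (hy : ContinuousOn y (Icc a b))
    (hγ₀ : γ₀ ∈ Icc a b) (hy₀ : y γ₀ ∈ Ioo (0:ℝ) 1) {ε : ℝ} (hε : 0 < ε) :
    ∀ᶠ γ in 𝓝[Icc a b] γ₀, ∃ x, PullbackOfType l F c y n S γ x ∧ dist x x₀ < ε := by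
  have hcont : ∀ γ ∈ Icc a b, Continuous (F γ) := fun γ hγ => (hmodal γ hγ).2.1.continuous
  have hx₀01 := hx₀.mem_Ioo_zero_one (hmodal γ₀ hγ₀).1 hy₀
  have hgood := hx₀.eventually_iterate_mem_Ioo hfam hmodal hγ₀ hy₀
  rw [nhdsWithin_prod_eq, nhdsWithin_eq_nhds.2 (Icc_mem_nhds hx₀01.1 hx₀01.2)] at hgood
  obtain ⟨P, hP, Q, hQ, hPQ⟩ := eventually_prod_iff.1 hgood
  obtain ⟨r, hr0, hrQ⟩ :=
    (nhds_basis_Icc_pos x₀).eventually_iff.1 (hQ.and (Metric.ball_mem_nhds x₀ hε))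
  have hJ : ∀ {γ}, P γ → ∀ x ∈ Icc (x₀ - r) (x₀ + r), _ := fun hγ x hx => hPQ hγ (hrQ hx).1
  have hP₀ : P γ₀ := hP.self_of_nhdsWithin hγ₀
  have hinj : InjOn (F γ₀)^[n] (Icc (x₀ - r) (x₀ + r)) :=
    (injOn_iterate_of_injOn (fun k => lap l (c γ₀) (S k))
      fun _ => (hmodal γ₀ hγ₀).1.injOn_lap _).mono
      fun x hx k => Ioo_subset_Icc_self ((hJ hP₀ x hx).2 k)
  have hstrad : y γ₀ ∈ uIoo ((F γ₀)^[n] (x₀ - r)) ((F γ₀)^[n] (x₀ + r)) :=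
    hx₀.1 ▸ ((hcont γ₀ hγ₀).iterate n).continuousOn.apply_mem_uIoo_of_injOn hinj
      ⟨by linarith, by linarith⟩
  have hend : ∀ x ∈ Icc (0:ℝ) 1, Tendsto (fun γ => (F γ)^[n] x) (𝓝[Icc a b] γ₀)
      (𝓝 ((F γ₀)^[n] x)) := fun x hx =>
    (hfam.continuousOn_iterate hmodal n).uncurry_right (f := fun γ x => (F γ)^[n] x) x hx γ₀ hγ₀
  have hp01 := (hJ hP₀ (x₀ - r) ⟨le_rfl, by linarith⟩).1.2
  have hq01 := (hJ hP₀ (x₀ + r) ⟨by linarith, le_rfl⟩).1.2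
  have hstrad_near : ∀ᶠ γ in 𝓝[Icc a b] γ₀,
      y γ ∈ uIoo ((F γ)^[n] (x₀ - r)) ((F γ)^[n] (x₀ + r)) :=
    (((hend _ hp01).inf_nhds (hend _ hq01)).eventually_lt (hy γ₀ hγ₀) hstrad.1).and
      ((hy γ₀ hγ₀).eventually_lt ((hend _ hp01).sup_nhds (hend _ hq01)) hstrad.2)
  filter_upwards [hP, hstrad_near, eventually_mem_nhdsWithin] with γ hPγ hyγ hγ
  obtain ⟨x, hx, hfx⟩ : ∃ x ∈ Icc (x₀ - r) (x₀ + r), (F γ)^[n] x = y γ := by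
    rw [← uIcc_of_le (by linarith : x₀ - r ≤ x₀ + r)]
    exact intermediate_value_uIcc ((hcont γ hγ).iterate n).continuousOn
      (uIoo_subset_uIcc_self hyγ)
  exact ⟨x, ⟨hfx, fun k => Or.inl (Or.inl ((hJ hPγ x hx).2 k))⟩, (hrQ hx).2⟩

lemma exists_isOpen_inter_eq_of_mem_nhdsWithin {X : Type*} [TopologicalSpace X] {s t : Set X}
    (hst : s ⊆ t) (h : ∀ x ∈ s, s ∈ 𝓝[t] x) : ∃ U, IsOpen U ∧ s = U ∩ t :=
  ⟨interior {x | x ∈ t → x ∈ s}, isOpen_interior,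
    Subset.antisymm
      (fun x hx => ⟨mem_interior_iff_mem_nhds.2 (mem_nhdsWithin_iff_eventually.1 (h x hx)), hst hx⟩)
      fun _ hx => interior_subset hx.1 hx.2⟩

theorem pullback_of_type_unique_open_continuous_general
    (l n : ℕ) (F : ℝ → ℝ → ℝ) (c : ℝ → Fin l → ℝ) (a b : ℝ)
    (y : ℝ → ℝ) (S : Fin n → Fin (l + 1))
    (hfam : C1FamilyOn F a b)
    (hmodal : ∀ γ ∈ Icc a b, IsC1LModal l (F γ) (c γ))
    (hy : ContinuousOn y (Icc a b))
    (hyint : ∀ γ ∈ Icc a b, y γ ∈ Ioo (0:ℝ) 1) :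
    -- (i) uniqueness
    (∀ γ ∈ Icc a b, ∀ x₁ x₂ : ℝ,
      PullbackOfType l F c y n S γ x₁ → PullbackOfType l F c y n S γ x₂ → x₁ = x₂) ∧
    -- (ii) the domain of definition is open in [a,b], and (iii) the pullback is
    -- continuous there
    ∃ U : Set ℝ, IsOpen U ∧
      {γ | γ ∈ Icc a b ∧ ∃ x, PullbackOfType l F c y n S γ x} = U ∩ Icc a b ∧
      ∃ xf : ℝ → ℝ, ContinuousOn xf (U ∩ Icc a b) ∧
        ∀ γ ∈ U ∩ Icc a b, PullbackOfType l F c y n S γ (xf γ) := by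
  have hunique : ∀ γ ∈ Icc a b, ∀ x₁ x₂ : ℝ,
      PullbackOfType l F c y n S γ x₁ → PullbackOfType l F c y n S γ x₂ → x₁ = x₂ :=
    fun γ hγ _ _ h₁ h₂ => h₁.unique h₂ (hmodal γ hγ).1 (hyint γ hγ)
  set D := {γ | γ ∈ Icc a b ∧ ∃ x, PullbackOfType l F c y n S γ x}
  have hDI : D ⊆ Icc a b := fun _ hγ => hγ.1
  obtain ⟨U, hU, hDU⟩ := exists_isOpen_inter_eq_of_mem_nhdsWithin hDI
    fun γ₀ ⟨hγ₀, _, hx₀⟩ =>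
      ((hx₀.eventually_exists_dist_lt hfam hmodal hy hγ₀ (hyint γ₀ hγ₀) one_pos).and
        eventually_mem_nhdsWithin).mono fun _ ⟨⟨x, hx, _⟩, hγ⟩ => ⟨hγ, x, hx⟩
  have hspec : ∀ γ ∈ D, PullbackOfType l F c y n S γ
      (Classical.epsilon (PullbackOfType l F c y n S γ)) := fun _ hγ =>
    Classical.epsilon_spec hγ.2
  refine ⟨hunique, U, hU, hDU, fun γ => Classical.epsilon (PullbackOfType l F c y n S γ),
    ?_, hDU ▸ hspec⟩
  rw [← hDU]
  intro γ₀ hγ₀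
  refine Metric.tendsto_nhds.2 fun ε hε => ?_
  have hnear :=
    (hspec γ₀ hγ₀).eventually_exists_dist_lt hfam hmodal hy hγ₀.1 (hyint γ₀ hγ₀.1) hε
  filter_upwards [nhdsWithin_mono γ₀ hDI hnear, self_mem_nhdsWithin]
    with γ ⟨x, hx, hdist⟩ hγ
  rwa [hunique γ hγ.1 _ _ (hspec γ hγ) hx]

/-- Pullbacks of a prescribed combinatorial type: they are unique, their domain of
definition is open in `[α,β]`, and they depend continuously on the parameter. -/
theorem pullback_of_type_unique_open_continuous
    (l n : ℕ) (hn : 1 ≤ n) (F : ℝ → ℝ → ℝ) (c : ℝ → Fin l → ℝ) (a b : ℝ)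
    (y : ℝ → ℝ) (S : Fin n → Fin (l + 1))
    (hfam : C1FamilyOn F a b)
    (hmodal : ∀ γ ∈ Icc a b, IsC1LModal l (F γ) (c γ))
    (hy : ContinuousOn y (Icc a b))
    (hyint : ∀ γ ∈ Icc a b, y γ ∈ Ioo (0:ℝ) 1) :
    -- (i) uniqueness
    (∀ γ ∈ Icc a b, ∀ x₁ x₂ : ℝ,
      PullbackOfType l F c y n S γ x₁ → PullbackOfType l F c y n S γ x₂ → x₁ = x₂) ∧
    -- (ii) the domain of definition is open in [a,b], and (iii) the pullback is
    -- continuous there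
    ∃ U : Set ℝ, IsOpen U ∧
      {γ | γ ∈ Icc a b ∧ ∃ x, PullbackOfType l F c y n S γ x} = U ∩ Icc a b ∧
      ∃ xf : ℝ → ℝ, ContinuousOn xf (U ∩ Icc a b) ∧
        ∀ γ ∈ U ∩ Icc a b, PullbackOfType l F c y n S γ (xf γ) :=
  pullback_of_type_unique_open_continuous_general l n F c a b y S hfam hmodal hy hyint
end
end

section
/- Let f be a complex polynomial of degree d ≥ 2 whose filled Julia set K_f has empty interior (equivalently, the Fatou set of f is connected, being the basin of infinity, and then K_f equals the Julia set J of f). Then for every ε > 0 there exists δ > 0 such that every complex polynomial g of degree d with |f − g| < δ satisfies K_g ⊆ (K_f)_{+ε}; in particular the Julia set of g is contained in the ε-neighborhood of the Julia set of f. -/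
open Set Metric

noncomputable section

/-- The filled Julia set of a complex polynomial: the set of points with bounded forward
orbit. -/
def filledJulia (f : Polynomial ℂ) : Set ℂ :=
  {z : ℂ | Bornology.IsBounded (Set.range fun n : ℕ => (fun w => f.eval w)^[n] z)}

open Polynomial

lemma filledJulia_iterate (g : Polynomial ℂ) {z : ℂ} (hz : z ∈ filledJulia g) (n : ℕ) :
    (fun w => g.eval w)^[n] z ∈ filledJulia g := by
  simp only [filledJulia, Set.mem_setOf_eq] at hz ⊢
  refine hz.subset ?_
  rintro _ ⟨m, rfl⟩
  exact ⟨m + n, by simp [Function.iterate_add_apply]⟩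

-- escape lemma
lemma escape_lemma (d : ℕ) (hd : 2 ≤ d) (g : Polynomial ℂ) (hg : g.natDegree = d)
    (c M R : ℝ) (hc0 : 0 ≤ c) (hc : c ≤ ‖g.coeff d‖) (hM : ∀ i < d, ‖g.coeff i‖ ≤ M)
    (hM0 : 0 ≤ M) (hR1 : 1 ≤ R) (hRc : 2 + d * M ≤ c * R) :
    ∀ z : ℂ, R ≤ ‖z‖ → 2 * ‖z‖ ≤ ‖g.eval z‖ := by
  intro z hz
  have hz1 : 1 ≤ ‖z‖ := le_trans hR1 hz
  have hz0 : 0 ≤ ‖z‖ := by positivity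
  have hev : g.eval z = (∑ i ∈ Finset.range d, g.coeff i * z ^ i) + g.coeff d * z ^ d := by
    rw [Polynomial.eval_eq_sum_range, hg, Finset.sum_range_succ]
  have hT : ‖∑ i ∈ Finset.range d, g.coeff i * z ^ i‖ ≤ d * (M * ‖z‖ ^ (d - 1)) := by
    calc ‖∑ i ∈ Finset.range d, g.coeff i * z ^ i‖
        ≤ ∑ i ∈ Finset.range d, ‖g.coeff i * z ^ i‖ := norm_sum_le _ _
      _ ≤ ∑ _i ∈ Finset.range d, M * ‖z‖ ^ (d - 1) := by
          refine Finset.sum_le_sum fun i hi => ?_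
          rw [norm_mul, norm_pow]
          have hi' := Finset.mem_range.mp hi
          exact mul_le_mul (hM i hi') (pow_le_pow_right₀ hz1 (by omega)) (by positivity) hM0
      _ = d * (M * ‖z‖ ^ (d - 1)) := by
          rw [Finset.sum_const, Finset.card_range, nsmul_eq_mul]
  have hlead : c * ‖z‖ ^ d ≤ ‖g.coeff d * z ^ d‖ := by
    rw [norm_mul, norm_pow]
    exact mul_le_mul_of_nonneg_right hc (by positivity)
  have h1 : c * ‖z‖ ^ d - d * (M * ‖z‖ ^ (d - 1)) ≤ ‖g.eval z‖ := by
    rw [hev]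
    have h2 := norm_sub_le ((∑ i ∈ Finset.range d, g.coeff i * z ^ i) + g.coeff d * z ^ d)
       (∑ i ∈ Finset.range d, g.coeff i * z ^ i)
    simp only [add_sub_cancel_left] at h2
    linarith
  -- arithmetic
  have hpow : ‖z‖ ^ d = ‖z‖ ^ (d - 1) * ‖z‖ := by
    rw [← pow_succ]; congr 1; omega
  have hzz : ‖z‖ ≤ ‖z‖ ^ (d - 1) := by
    calc ‖z‖ = ‖z‖ ^ 1 := (pow_one _).symm
      _ ≤ ‖z‖ ^ (d - 1) := pow_le_pow_right₀ hz1 (by omega)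
  have hA : 2 + d * M ≤ c * ‖z‖ := le_trans hRc (by nlinarith)
  have key : ‖z‖ * 2 ≤ ‖z‖ ^ (d - 1) * (c * ‖z‖ - d * M) :=
    mul_le_mul hzz (by linarith) (by linarith) (by positivity)
  nlinarith [key]

lemma iterate_growth (g : Polynomial ℂ) (R : ℝ) (hR1 : 1 ≤ R)
    (hesc : ∀ z : ℂ, R ≤ ‖z‖ → 2 * ‖z‖ ≤ ‖g.eval z‖) :
    ∀ z : ℂ, R ≤ ‖z‖ → ∀ n : ℕ, 2 ^ n * ‖z‖ ≤ ‖(fun w => g.eval w)^[n] z‖ := by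
  intro z hz n
  induction n with
  | zero => simp
  | succ n ih =>
    have h1 : (1:ℝ) ≤ 2 ^ n := one_le_pow₀ (by norm_num)
    have hw : R ≤ ‖(fun w => g.eval w)^[n] z‖ := by nlinarith [le_trans hR1 hz]
    have := hesc _ hw
    rw [Function.iterate_succ_apply']
    calc (2:ℝ) ^ (n+1) * ‖z‖ = 2 * (2 ^ n * ‖z‖) := by ring
      _ ≤ 2 * ‖(fun w => g.eval w)^[n] z‖ := by linarith
      _ ≤ _ := this

lemma mem_filledJulia_norm_lt (g : Polynomial ℂ) (R : ℝ) (hR1 : 1 ≤ R)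
    (hesc : ∀ z : ℂ, R ≤ ‖z‖ → 2 * ‖z‖ ≤ ‖g.eval z‖) {z : ℂ}
    (hz : z ∈ filledJulia g) : ‖z‖ < R := by
  by_contra h
  push_neg at h
  simp only [filledJulia, Set.mem_setOf_eq] at hz
  have hz1 : 1 ≤ ‖z‖ := le_trans hR1 h
  obtain ⟨C, hC⟩ := isBounded_iff_forall_norm_le.mp hz
  obtain ⟨n, hn⟩ := pow_unbounded_of_one_lt C (one_lt_two (α := ℝ))
  have h1 : ‖(fun w => g.eval w)^[n] z‖ ≤ C := hC _ ⟨n, rfl⟩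
  have h2 := iterate_growth g R hR1 hesc z h n
  nlinarith [pow_nonneg (le_of_lt (two_pos (α := ℝ))) n]

/-- Continuity of (filled) Julia sets: if `f` is a polynomial of degree `d ≥ 2` whose filled
Julia set has empty interior (so that it coincides with the Julia set), then for every `ε > 0`
all polynomials `g` of degree `d` with coefficients `δ`-close to those of `f` have
`K_g ⊆ (K_f)_{+ε}`. -/
theorem filledJulia_continuity
    (d : ℕ) (hd : 2 ≤ d) (f : Polynomial ℂ) (hdeg : f.natDegree = d)
    (hint : interior (filledJulia f) = ∅) :
    ∀ ε > (0:ℝ), ∃ δ > (0:ℝ), ∀ g : Polynomial ℂ, g.natDegree = d →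
      (∀ i ≤ d, ‖f.coeff i - g.coeff i‖ < δ) →
      filledJulia g ⊆ Metric.thickening ε (filledJulia f) := by
  intro ε hε
  have hf0 : f ≠ 0 := by
    intro h
    rw [h] at hdeg
    simp at hdeg
    omega
  have ha : 0 < ‖f.coeff d‖ := by
    rw [norm_pos_iff, ← hdeg, Polynomial.coeff_natDegree]
    exact Polynomial.leadingCoeff_ne_zero.mpr hf0
  set c : ℝ := ‖f.coeff d‖ / 2 with hcdef
  have hc : 0 < c := by positivity
  set M : ℝ := (∑ i ∈ Finset.range (d+1), ‖f.coeff i‖) + c with hMdef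
  have hsum0 : 0 ≤ ∑ i ∈ Finset.range (d+1), ‖f.coeff i‖ :=
    Finset.sum_nonneg fun i _ => norm_nonneg _
  have hM0 : 0 ≤ M := by rw [hMdef]; linarith
  have hMc : ∀ g : Polynomial ℂ, (∀ i ≤ d, ‖f.coeff i - g.coeff i‖ ≤ c) →
      ∀ i ≤ d, ‖g.coeff i‖ ≤ M := by
    intro g hgc i hi
    have h1 : ‖g.coeff i‖ - ‖f.coeff i‖ ≤ ‖g.coeff i - f.coeff i‖ := norm_sub_norm_le _ _
    rw [norm_sub_rev] at h1
    have h2 : ‖f.coeff i‖ ≤ ∑ j ∈ Finset.range (d+1), ‖f.coeff j‖ :=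
      Finset.single_le_sum (fun j _ => norm_nonneg _) (Finset.mem_range.mpr (by omega))
    have h3 := hgc i hi
    rw [hMdef]
    linarith
  set R : ℝ := max 1 ((2 + d * M) / c) with hRdef
  have hR1 : 1 ≤ R := le_max_left _ _
  have hR0 : 0 < R := by linarith
  have hRc : 2 + d * M ≤ c * R := by
    have h := le_max_right 1 ((2 + d * M) / c)
    rw [div_le_iff₀ hc] at h
    rw [hRdef]; linarith [h]
  have hesc : ∀ g : Polynomial ℂ, g.natDegree = d →
      (∀ i ≤ d, ‖f.coeff i - g.coeff i‖ ≤ c) →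
      ∀ z : ℂ, R ≤ ‖z‖ → 2 * ‖z‖ ≤ ‖g.eval z‖ := by
    intro g hg hgc
    have hcg : c ≤ ‖g.coeff d‖ := by
      have h1 : ‖f.coeff d‖ - ‖g.coeff d‖ ≤ ‖f.coeff d - g.coeff d‖ := norm_sub_norm_le _ _
      have h2 := hgc d le_rfl
      rw [hcdef] at *
      linarith
    exact escape_lemma d hd g hg c M R hc.le hcg
      (fun i hi => hMc g hgc i hi.le) hM0 hR1 hRc
  have hescf : ∀ z : ℂ, R ≤ ‖z‖ → 2 * ‖z‖ ≤ ‖f.eval z‖ :=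
    hesc f hdeg (fun i _ => by simp [hc.le])
  -- the compact set
  set S : Set ℂ := closedBall (0:ℂ) R \ thickening ε (filledJulia f) with hSdef
  have hSc : IsCompact S := (isCompact_closedBall _ _).diff isOpen_thickening
  set U : ℕ → Set ℂ := fun n => {z | R + 1 < ‖(fun w => f.eval w)^[n] z‖} with hUdef
  have hUopen : ∀ n, IsOpen (U n) := fun n =>
    isOpen_lt continuous_const (continuous_norm.comp (f.continuous.iterate n))
  have hUmono : Monotone U := by
    refine monotone_nat_of_le_succ fun n z hz => ?_
    simp only [hUdef, Set.mem_setOf_eq] at hz ⊢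
    rw [Function.iterate_succ_apply']
    have h1 : R ≤ ‖(fun w => f.eval w)^[n] z‖ := by linarith
    have h2 := hescf _ h1
    linarith
  have hScover : S ⊆ ⋃ n, U n := by
    intro z hz
    have hzK : z ∉ filledJulia f := fun h => hz.2 (self_subset_thickening hε _ h)
    simp only [filledJulia, Set.mem_setOf_eq] at hzK
    rw [isBounded_iff_forall_norm_le] at hzK
    push_neg at hzK
    obtain ⟨x, ⟨n, rfl⟩, hx⟩ := hzK (R + 1)
    exact Set.mem_iUnion.mpr ⟨n, by simpa [hUdef] using hx⟩
  obtain ⟨N, hN⟩ := hSc.elim_directed_cover U hUopen hScover hUmono.directed_le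
  -- Lipschitz constant on the ball of radius R+1
  obtain ⟨L0, hL0⟩ := (isCompact_closedBall (0:ℂ) (R+1)).exists_bound_of_continuousOn
    f.derivative.continuous.continuousOn
  set L : ℝ := max L0 0 with hLdef
  have hL : 0 ≤ L := le_max_right _ _
  have hLip : ∀ x ∈ closedBall (0:ℂ) (R+1), ∀ y ∈ closedBall (0:ℂ) (R+1),
      ‖f.eval y - f.eval x‖ ≤ L * ‖y - x‖ := by
    intro x hx y hy
    have hderiv : ∀ w ∈ closedBall (0:ℂ) (R+1),
        HasDerivWithinAt (fun x : ℂ => f.eval x) (f.derivative.eval w)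
          (closedBall (0:ℂ) (R+1)) w :=
      fun w _ => (f.hasDerivAt w).hasDerivWithinAt
    have hbd : ∀ w ∈ closedBall (0:ℂ) (R+1), ‖f.derivative.eval w‖ ≤ L :=
      fun w hw => (hL0 w hw).trans (le_max_left _ _)
    exact Convex.norm_image_sub_le_of_norm_hasDerivWithin_le hderiv hbd
      (convex_closedBall _ _) hx hy
  -- coefficientwise closeness controls eval difference on the ball
  have hdiffbound : ∀ δ' : ℝ, 0 ≤ δ' → ∀ g : Polynomial ℂ, g.natDegree = d →
      (∀ i ≤ d, ‖f.coeff i - g.coeff i‖ ≤ δ') → ∀ w : ℂ, ‖w‖ ≤ R →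
      ‖f.eval w - g.eval w‖ ≤ δ' * (((d:ℝ)+1) * R^d) := by
    intro δ' hδ' g hg hgc w hw
    have hfg : (f - g).natDegree < d + 1 := by
      have := Polynomial.natDegree_sub_le f g
      rw [hdeg, hg] at this
      omega
    have hev : f.eval w - g.eval w = (f - g).eval w := by simp
    rw [hev, Polynomial.eval_eq_sum_range' hfg]
    calc ‖∑ i ∈ Finset.range (d+1), (f - g).coeff i * w ^ i‖
        ≤ ∑ i ∈ Finset.range (d+1), ‖(f - g).coeff i * w ^ i‖ := norm_sum_le _ _
      _ ≤ ∑ _i ∈ Finset.range (d+1), δ' * R^d := by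
          refine Finset.sum_le_sum fun i hi => ?_
          rw [norm_mul, norm_pow, Polynomial.coeff_sub]
          have hi' : i ≤ d := by
            have := Finset.mem_range.mp hi
            omega
          have hpow : ‖w‖ ^ i ≤ R ^ d :=
            (pow_le_pow_left₀ (norm_nonneg w) hw i).trans (pow_le_pow_right₀ hR1 hi')
          exact mul_le_mul (hgc i hi') hpow (by positivity) hδ'
      _ = δ' * (((d:ℝ)+1) * R^d) := by
          rw [Finset.sum_const, Finset.card_range, nsmul_eq_mul]
          push_cast; ring
  -- choose δ
  set P : ℝ := ((d:ℝ)+1) * R^d with hPdef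
  have hP : 0 < P := by rw [hPdef]; positivity
  set Q : ℝ := (L+1)^N with hQdef
  have hQ1 : (1:ℝ) ≤ Q := one_le_pow₀ (by linarith)
  have hQ0 : 0 < Q := by linarith
  refine ⟨min c (1 / (P * Q + 1)), lt_min hc (by positivity), ?_⟩
  intro g hg hgc
  set δ : ℝ := min c (1 / (P * Q + 1)) with hδdef
  have hδ0 : 0 ≤ δ := le_min hc.le (by positivity)
  have hgc' : ∀ i ≤ d, ‖f.coeff i - g.coeff i‖ ≤ c :=
    fun i hi => (hgc i hi).le.trans (min_le_left _ _)
  have hgδ : ∀ i ≤ d, ‖f.coeff i - g.coeff i‖ ≤ δ := fun i hi => (hgc i hi).le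
  set η : ℝ := δ * P with hηdef
  have hη0 : 0 ≤ η := by rw [hηdef]; positivity
  have hηQ : η * Q < 1 := by
    have hδle : δ ≤ 1 / (P * Q + 1) := min_le_right _ _
    have h1 : 1 / (P * Q + 1) * (P * Q) < 1 := by
      rw [div_mul_eq_mul_div, one_mul, div_lt_one (by positivity)]
      linarith
    have h2 : δ * (P * Q) ≤ 1 / (P * Q + 1) * (P * Q) :=
      mul_le_mul_of_nonneg_right hδle (by positivity)
    calc η * Q = δ * (P * Q) := by rw [hηdef]; ring
      _ ≤ 1 / (P * Q + 1) * (P * Q) := h2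
      _ < 1 := h1
  -- main argument
  intro z hz
  by_contra hzt
  have hescg := hesc g hg hgc'
  have hnorm : ∀ n : ℕ, ‖(fun w => g.eval w)^[n] z‖ < R :=
    fun n => mem_filledJulia_norm_lt g R hR1 hescg (filledJulia_iterate g hz n)
  have hzS : z ∈ S := by
    constructor
    · rw [mem_closedBall_zero_iff]
      have := hnorm 0
      simpa using this.le
    · exact hzt
  have hNz : R + 1 < ‖(fun w => f.eval w)^[N] z‖ := hN hzS
  -- comparison of iterates
  have hkey : ∀ k : ℕ, k ≤ N →
      ‖(fun w => f.eval w)^[k] z - (fun w => g.eval w)^[k] z‖ ≤ η * (L+1)^k := by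
    intro k
    induction k with
    | zero => intro _; simpa using (by positivity : (0:ℝ) ≤ η * (L+1)^0)
    | succ k ih =>
      intro hk
      have hk' : k ≤ N := by omega
      have hek := ih hk'
      have hLk : (L+1)^k ≤ Q := by rw [hQdef]; exact pow_le_pow_right₀ (by linarith) hk'
      have h1k : (1:ℝ) ≤ (L+1)^k := one_le_pow₀ (by linarith)
      set u : ℂ := (fun w => f.eval w)^[k] z with hudef
      set v : ℂ := (fun w => g.eval w)^[k] z with hvdef
      have he1 : ‖u - v‖ ≤ 1 := by
        have : η * (L+1)^k ≤ η * Q := mul_le_mul_of_nonneg_left hLk hη0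
        linarith
      have hv : ‖v‖ ≤ R := (hnorm k).le
      have hvball : v ∈ closedBall (0:ℂ) (R+1) := by
        rw [mem_closedBall_zero_iff]; linarith
      have huball : u ∈ closedBall (0:ℂ) (R+1) := by
        rw [mem_closedBall_zero_iff]
        have h3 : ‖u‖ - ‖v‖ ≤ ‖u - v‖ := norm_sub_norm_le _ _
        linarith
      rw [Function.iterate_succ_apply', Function.iterate_succ_apply', ← hudef, ← hvdef]
      have htri : ‖f.eval u - g.eval v‖ ≤ ‖f.eval u - f.eval v‖ + ‖f.eval v - g.eval v‖ := by
        have : f.eval u - g.eval v = (f.eval u - f.eval v) + (f.eval v - g.eval v) := by ring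
        rw [this]; exact norm_add_le _ _
      have hlip := hLip v hvball u huball
      have hdb := hdiffbound δ hδ0 g hg hgδ v hv
      rw [← hηdef] at hdb
      have hLuv : L * ‖u - v‖ ≤ L * (η * (L+1)^k) := mul_le_mul_of_nonneg_left hek hL
      have hstep : ‖f.eval u - g.eval v‖ ≤ L * (η * (L+1)^k) + η := by linarith
      calc ‖f.eval u - g.eval v‖ ≤ L * (η * (L+1)^k) + η := hstep
        _ ≤ η * (L+1)^(k+1) := by
            have hps : (L+1)^(k+1) = (L+1) * (L+1)^k := by rw [pow_succ]; ring
            nlinarith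
  -- conclusion
  have hE := hkey N le_rfl
  rw [← hQdef] at hE
  have hgN : ‖(fun w => g.eval w)^[N] z‖ < R := hnorm N
  have h3 : ‖(fun w => f.eval w)^[N] z‖ - ‖(fun w => g.eval w)^[N] z‖ ≤
      ‖(fun w => f.eval w)^[N] z - (fun w => g.eval w)^[N] z‖ := norm_sub_norm_le _ _
  have hηQ' : η * Q ≤ 1 := hηQ.le
  linarith
end
end

section
/- Let f be a complex polynomial of degree d ≥ 2 whose filled Julia set K_f has empty interior (so K_f equals the Julia set of f) and which satisfies the Exponential Shrinking of components condition: there exist r₀ > 0 and λ₀ > 1 such that for every z ∈ K_f, every n ≥ 0 and every connected component W of f^{-n}(B(z,r₀)), diam W < λ₀^{-n}. Then there exists δ > 0 such that for every 0 < r < δ there exist N > 0 and d' > 0 with the following property: for every complex polynomial g of degree d with |f − g| < d' and every z ∈ K_g, every connected component of g^{-N}(B(z,δ)) has diameter less than r. -/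
open Set Metric

noncomputable section

open Polynomial in
/-- Bound on the difference of evaluations of two polynomials with close coefficients. -/
lemma eval_diff_bound (d : ℕ) (f g : Polynomial ℂ) (hf : f.natDegree ≤ d) (hg : g.natDegree ≤ d)
    (d' : ℝ) (hc : ∀ i ≤ d, ‖f.coeff i - g.coeff i‖ ≤ d') (M : ℝ) (hM : 1 ≤ M) (y : ℂ)
    (hy : ‖y‖ ≤ M) : ‖f.eval y - g.eval y‖ ≤ (d + 1 : ℝ) * d' * M ^ d := by
  have hd' : 0 ≤ d' := le_trans (norm_nonneg _) (hc 0 (Nat.zero_le d))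
  have h1 : (f - g).natDegree < d + 1 :=
    lt_of_le_of_lt (le_trans (natDegree_sub_le f g) (max_le hf hg)) (Nat.lt_succ_self d)
  rw [← eval_sub, eval_eq_sum_range' h1]
  calc ‖∑ i ∈ Finset.range (d + 1), (f - g).coeff i * y ^ i‖
      ≤ ∑ i ∈ Finset.range (d + 1), ‖(f - g).coeff i * y ^ i‖ := norm_sum_le _ _
    _ ≤ ∑ _i ∈ Finset.range (d + 1), d' * M ^ d := by
        apply Finset.sum_le_sum
        intro i hi
        rw [Finset.mem_range, Nat.lt_succ_iff] at hi
        rw [norm_mul, norm_pow]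
        have h2 : ‖y‖ ^ i ≤ M ^ d :=
          le_trans (pow_le_pow_left₀ (norm_nonneg y) hy i) (pow_le_pow_right₀ hM hi)
        exact mul_le_mul (by rw [coeff_sub]; exact hc i hi) h2 (pow_nonneg (norm_nonneg y) i) hd'
    _ = (d + 1 : ℝ) * d' * M ^ d := by
        rw [Finset.sum_const, Finset.card_range]; push_cast; ring

open Polynomial in
/-- Uniform escape radius for all polynomials with coefficients close to those of `f`. -/
lemma exists_escape (d : ℕ) (hd : 2 ≤ d) (f : Polynomial ℂ) (hdeg : f.natDegree = d) :
    ∃ Ru : ℝ, 1 ≤ Ru ∧ ∀ g : Polynomial ℂ, g.natDegree = d →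
      (∀ i ≤ d, ‖f.coeff i - g.coeff i‖ < min 1 (‖f.coeff d‖ / 2)) →
      ∀ w : ℂ, Ru ≤ ‖w‖ → 2 * ‖w‖ ≤ ‖g.eval w‖ := by
  have hf0 : f ≠ 0 := by
    intro h; rw [h, natDegree_zero] at hdeg; omega
  have ha : f.coeff d ≠ 0 := by
    rw [← hdeg]; exact leadingCoeff_ne_zero.mpr hf0
  have hapos : (0:ℝ) < ‖f.coeff d‖ := norm_pos_iff.mpr ha
  set C : ℝ := ∑ i ∈ Finset.range d, (‖f.coeff i‖ + 1) with hC
  have hC0 : 0 ≤ C := Finset.sum_nonneg fun i _ => by positivity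
  refine ⟨max 1 ((2 + C) / (‖f.coeff d‖ / 2)), le_max_left _ _, ?_⟩
  intro g hg hc w hw
  have hw1 : 1 ≤ ‖w‖ := le_trans (le_max_left _ _) hw
  have hw0 : 0 < ‖w‖ := lt_of_lt_of_le one_pos hw1
  have hw2 : 2 + C ≤ ‖f.coeff d‖ / 2 * ‖w‖ := by
    have h := le_trans (le_max_right 1 ((2 + C) / (‖f.coeff d‖ / 2))) hw
    rw [div_le_iff₀ (by positivity)] at h
    linarith
  obtain ⟨e, rfl⟩ : ∃ e, d = e + 1 := ⟨d - 1, by omega⟩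
  set d := e + 1
  have hsum : g.eval w = g.coeff d * w ^ d + ∑ i ∈ Finset.range d, g.coeff i * w ^ i := by
    rw [eval_eq_sum_range' (show g.natDegree < d + 1 by omega), Finset.sum_range_succ]
    ring
  have hlead : ‖f.coeff d‖ / 2 ≤ ‖g.coeff d‖ := by
    have h1 := hc d le_rfl
    have h2 : ‖f.coeff d - g.coeff d‖ < ‖f.coeff d‖ / 2 :=
      lt_of_lt_of_le h1 (min_le_right _ _)
    have h3 := norm_sub_norm_le (f.coeff d) (g.coeff d)
    linarith
  have htail : ‖∑ i ∈ Finset.range d, g.coeff i * w ^ i‖ ≤ C * ‖w‖ ^ e := by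
    calc ‖∑ i ∈ Finset.range d, g.coeff i * w ^ i‖
        ≤ ∑ i ∈ Finset.range d, ‖g.coeff i * w ^ i‖ := norm_sum_le _ _
      _ ≤ ∑ i ∈ Finset.range d, (‖f.coeff i‖ + 1) * ‖w‖ ^ e := by
          apply Finset.sum_le_sum
          intro i hi
          rw [Finset.mem_range] at hi
          rw [norm_mul, norm_pow]
          have h4 : ‖g.coeff i‖ ≤ ‖f.coeff i‖ + 1 := by
            have h5 := lt_of_lt_of_le (hc i (by omega)) (min_le_left _ _)
            have h6 := norm_sub_norm_le (g.coeff i) (f.coeff i)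
            rw [norm_sub_rev] at h6
            linarith
          exact mul_le_mul h4 (pow_le_pow_right₀ hw1 (by omega))
            (pow_nonneg (norm_nonneg w) i) (by positivity)
      _ = C * ‖w‖ ^ e := by rw [hC, Finset.sum_mul]
  have hlow : ‖g.coeff d * w ^ d‖ - ‖∑ i ∈ Finset.range d, g.coeff i * w ^ i‖
      ≤ ‖g.eval w‖ := by
    rw [hsum]
    have := norm_add_le (g.coeff d * w ^ d + ∑ i ∈ Finset.range d, g.coeff i * w ^ i)
      (-(∑ i ∈ Finset.range d, g.coeff i * w ^ i))
    simp only [add_neg_cancel_right, norm_neg] at this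
    linarith
  rw [norm_mul, norm_pow] at hlow
  have hE1 : ‖w‖ ≤ ‖w‖ ^ e := by
    calc ‖w‖ = ‖w‖ ^ 1 := (pow_one _).symm
    _ ≤ ‖w‖ ^ e := pow_le_pow_right₀ hw1 (by omega)
  have hpowd : ‖w‖ ^ d = ‖w‖ ^ e * ‖w‖ := pow_succ _ _
  have hE0 : (0:ℝ) ≤ ‖w‖ ^ e := pow_nonneg (norm_nonneg w) e
  nlinarith [mul_le_mul hlead (le_refl (‖w‖ ^ d)) (pow_nonneg (norm_nonneg w) d)
      (norm_nonneg (g.coeff d)),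
    mul_le_mul_of_nonneg_left hw2 hE0, mul_le_mul_of_nonneg_right hE1 (le_of_lt hw0)]

/-- Iterated growth under an escape radius. -/
lemma grow_iter (g : Polynomial ℂ) (Ru : ℝ)
    (hgrow : ∀ w : ℂ, Ru ≤ ‖w‖ → 2 * ‖w‖ ≤ ‖g.eval w‖) (w : ℂ) (hw : Ru ≤ ‖w‖) (n : ℕ) :
    2 ^ n * ‖w‖ ≤ ‖(fun y => g.eval y)^[n] w‖ := by
  induction n with
  | zero => simp
  | succ n ih =>
    have h2n : (1:ℝ) ≤ 2 ^ n := one_le_pow₀ (by norm_num)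
    have hRn : Ru ≤ ‖(fun y => g.eval y)^[n] w‖ := by
      refine le_trans hw (le_trans ?_ ih)
      nlinarith [norm_nonneg w]
    rw [Function.iterate_succ_apply']
    have := hgrow _ hRn
    calc (2:ℝ) ^ (n+1) * ‖w‖ = 2 * (2 ^ n * ‖w‖) := by ring
      _ ≤ 2 * ‖(fun y => g.eval y)^[n] w‖ := by linarith
      _ ≤ _ := this

/-- A point with an iterate beyond the escape radius is not in the filled Julia set. -/
lemma notMem_julia (g : Polynomial ℂ) (Ru : ℝ) (hRu : 1 ≤ Ru)
    (hgrow : ∀ w : ℂ, Ru ≤ ‖w‖ → 2 * ‖w‖ ≤ ‖g.eval w‖) (z : ℂ) (m : ℕ)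
    (hz : Ru ≤ ‖(fun y => g.eval y)^[m] z‖) : z ∉ filledJulia g := by
  intro hmem
  rw [filledJulia, Set.mem_setOf_eq] at hmem
  obtain ⟨ρ, hρ⟩ := hmem.subset_closedBall 0
  have hz0 : 0 < ‖(fun y => g.eval y)^[m] z‖ := lt_of_lt_of_le one_pos (le_trans hRu hz)
  obtain ⟨n, hn⟩ := pow_unbounded_of_one_lt (ρ / ‖(fun y => g.eval y)^[m] z‖)
    (by norm_num : (1:ℝ) < 2)
  have h1 : (fun y => g.eval y)^[n + m] z ∈ closedBall (0:ℂ) ρ := hρ ⟨n + m, rfl⟩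
  rw [Function.iterate_add_apply] at h1
  have h2 := grow_iter g Ru hgrow _ hz n
  rw [mem_closedBall, dist_zero_right] at h1
  rw [div_lt_iff₀ hz0] at hn
  linarith

/-- The filled Julia set is contained in the closed ball of the escape radius. -/
lemma julia_bound (g : Polynomial ℂ) (Ru : ℝ) (hRu : 1 ≤ Ru)
    (hgrow : ∀ w : ℂ, Ru ≤ ‖w‖ → 2 * ‖w‖ ≤ ‖g.eval w‖) (z : ℂ) (hz : z ∈ filledJulia g) :
    ‖z‖ ≤ Ru := by
  by_contra h
  exact notMem_julia g Ru hRu hgrow z 0 (by simpa using le_of_lt (lt_of_not_ge h)) hz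

/-- Intermediate iterates of points of `g⁻ᴺ(B(z,δ))` stay in a bounded region. -/
lemma pre_bound (g : Polynomial ℂ) (Ru : ℝ) (hRu : 1 ≤ Ru)
    (hgrow : ∀ w : ℂ, Ru ≤ ‖w‖ → 2 * ‖w‖ ≤ ‖g.eval w‖) (z : ℂ) (hz : ‖z‖ ≤ Ru)
    (δ : ℝ) (N : ℕ) (w : ℂ) (hw : (fun y => g.eval y)^[N] w ∈ ball z δ) (k : ℕ) (hk : k ≤ N) :
    ‖(fun y => g.eval y)^[k] w‖ ≤ Ru + δ := by
  by_contra h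
  push_neg at h
  have hw' : dist ((fun y => g.eval y)^[N] w) z < δ := mem_ball.mp hw
  have hN : ‖(fun y => g.eval y)^[N] w‖ < Ru + δ := by
    have h1 : ‖(fun y => g.eval y)^[N] w‖ - ‖z‖ ≤ dist ((fun y => g.eval y)^[N] w) z := by
      rw [dist_eq_norm]
      exact norm_sub_norm_le _ _
    linarith
  have h2 := grow_iter g Ru hgrow _
    (by nlinarith [pos_of_mem_ball hw] : Ru ≤ ‖(fun y => g.eval y)^[k] w‖) (N - k)
  rw [← Function.iterate_add_apply] at h2
  have hNk : N - k + k = N := by omega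
  rw [hNk] at h2
  have h3 : (1:ℝ) ≤ 2 ^ (N - k) := one_le_pow₀ (by norm_num)
  nlinarith [pos_of_mem_ball hw]

open Polynomial in
/-- Comparison of the iterates of two polynomials with close coefficients along orbits
staying in a bounded region. -/
lemma iter_compare (d : ℕ) (f : Polynomial ℂ) (hf : f.natDegree ≤ d) (NN : ℕ) :
    ∀ M : ℝ, 1 ≤ M → ∀ ε : ℝ, 0 < ε → ∃ d' : ℝ, 0 < d' ∧
      ∀ g : Polynomial ℂ, g.natDegree ≤ d → (∀ i ≤ d, ‖f.coeff i - g.coeff i‖ < d') →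
        ∀ w : ℂ, ∀ n ≤ NN,
          (∀ k < n, ‖(fun y => f.eval y)^[k] w‖ ≤ M ∨ ‖(fun y => g.eval y)^[k] w‖ ≤ M) →
          ‖(fun y => f.eval y)^[n] w - (fun y => g.eval y)^[n] w‖ < ε := by
  induction NN with
  | zero =>
    intro M hM ε hε
    refine ⟨1, one_pos, fun g hg hc w n hn _ => ?_⟩
    interval_cases n
    simpa using hε
  | succ NN IH =>
    intro M hM ε hε
    have huc : UniformContinuousOn (fun y => f.eval y) (closedBall (0:ℂ) (M+1)) :=
      (isCompact_closedBall (0:ℂ) (M+1)).uniformContinuousOn_of_continuous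
        f.continuous.continuousOn
    rw [Metric.uniformContinuousOn_iff] at huc
    obtain ⟨θ, hθ, hθ'⟩ := huc (ε/2) (half_pos hε)
    have hε' : 0 < min θ 1 := lt_min hθ one_pos
    obtain ⟨d1, hd1, H1⟩ := IH M hM (min θ 1) hε'
    have hden : (0:ℝ) < (d + 1 : ℝ) * (M+1) ^ d := by positivity
    set d2 : ℝ := (ε/2) / ((d + 1 : ℝ) * (M+1) ^ d) with hd2def
    have hd2 : 0 < d2 := div_pos (half_pos hε) hden
    refine ⟨min d1 d2, lt_min hd1 hd2, ?_⟩
    intro g hg hc w n hn hbd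
    match n with
    | 0 => simpa using hε
    | (m+1) =>
      have hm : m ≤ NN := by omega
      have ih := H1 g hg (fun i hi => lt_of_lt_of_le (hc i hi) (min_le_left _ _)) w m hm
        (fun k hk => hbd k (by omega))
      set x := (fun y => f.eval y)^[m] w with hx
      set y := (fun y => g.eval y)^[m] w with hy
      have hxy1 : ‖x - y‖ < 1 := lt_of_lt_of_le ih (min_le_right _ _)
      have hxyθ : ‖x - y‖ < θ := lt_of_lt_of_le ih (min_le_left _ _)
      have hboth : ‖x‖ ≤ M + 1 ∧ ‖y‖ ≤ M + 1 := by
        rcases hbd m (Nat.lt_succ_self m) with h | h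
        · constructor
          · linarith
          · have := norm_sub_norm_le y x
            rw [norm_sub_rev] at hxy1
            linarith
        · constructor
          · have := norm_sub_norm_le x y
            linarith
          · linarith
      rw [Function.iterate_succ_apply', Function.iterate_succ_apply', ← hx, ← hy]
      have hsplit : f.eval x - g.eval y = (f.eval x - f.eval y) + (f.eval y - g.eval y) := by
        ring
      rw [hsplit]
      have ht1 : ‖f.eval x - f.eval y‖ < ε / 2 := by
        have := hθ' x (by simpa [mem_closedBall, dist_zero_right] using hboth.1)
          y (by simpa [mem_closedBall, dist_zero_right] using hboth.2)
          (by rwa [dist_eq_norm])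
        rwa [dist_eq_norm] at this
      have ht2 : ‖f.eval y - g.eval y‖ ≤ ε / 2 := by
        have := eval_diff_bound d f g hf hg d2
          (fun i hi => le_of_lt (lt_of_lt_of_le (hc i hi) (min_le_right _ _)))
          (M+1) (by linarith) y hboth.2
        calc ‖f.eval y - g.eval y‖ ≤ (d + 1 : ℝ) * d2 * (M+1) ^ d := this
          _ = ε / 2 := by rw [hd2def]; field_simp
      calc ‖(f.eval x - f.eval y) + (f.eval y - g.eval y)‖
          ≤ ‖f.eval x - f.eval y‖ + ‖f.eval y - g.eval y‖ := norm_add_le _ _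
        _ < ε := by linarith

open Polynomial in
/-- Upper semicontinuity of the filled Julia set: points of `K_g` are close to `K_f`
when `g` has coefficients close to those of `f`. -/
lemma julia_semicontinuous (d : ℕ) (f : Polynomial ℂ) (hfd : f.natDegree ≤ d)
    (Ru : ℝ) (hRu : 1 ≤ Ru) (d'₀ : ℝ) (hd'₀ : 0 < d'₀)
    (hgrowAll : ∀ g : Polynomial ℂ, g.natDegree = d →
      (∀ i ≤ d, ‖f.coeff i - g.coeff i‖ < d'₀) → ∀ w : ℂ, Ru ≤ ‖w‖ → 2 * ‖w‖ ≤ ‖g.eval w‖)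
    (hne : (filledJulia f).Nonempty) (η : ℝ) (hη : 0 < η) :
    ∃ d' : ℝ, 0 < d' ∧ d' ≤ d'₀ ∧
      ∀ g : Polynomial ℂ, g.natDegree = d → (∀ i ≤ d, ‖f.coeff i - g.coeff i‖ < d') →
        ∀ z ∈ filledJulia g, ∃ z'' ∈ filledJulia f, dist z z'' < η := by
  classical
  set U : Set ℂ := closedBall 0 Ru ∩ {w : ℂ | η ≤ infDist w (filledJulia f)} with hU
  have hUc : IsCompact U :=
    (isCompact_closedBall _ _).inter_right
      (isClosed_le continuous_const (continuous_infDist_pt _))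
  have hex : ∀ w : U, ∃ n : ℕ, Ru + 2 < ‖(fun y => f.eval y)^[n] (w:ℂ)‖ := by
    rintro ⟨w, hw⟩
    have hwK : w ∉ filledJulia f := by
      intro hwK
      have h1 : infDist w (filledJulia f) ≤ 0 := by
        have := infDist_le_dist_of_mem (x := w) hwK
        simpa using this
      have h2 := hw.2
      rw [Set.mem_setOf_eq] at h2
      linarith
    by_contra hcon
    push_neg at hcon
    apply hwK
    rw [filledJulia, Set.mem_setOf_eq]
    apply (isBounded_closedBall (x := (0:ℂ)) (r := Ru + 2)).subset
    rintro - ⟨n, rfl⟩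
    rw [mem_closedBall, dist_zero_right]
    exact hcon n
  have hcont : ∀ k : ℕ, Continuous fun y : ℂ => ‖(fun x => f.eval x)^[k] y‖ :=
    fun k => (f.continuous.iterate k).norm
  set nf : U → ℕ := fun w => Nat.find (hex w) with hnf
  have hn1 : ∀ w : U, Ru + 2 < ‖(fun y => f.eval y)^[nf w] (w:ℂ)‖ :=
    fun w => Nat.find_spec (hex w)
  have hn2 : ∀ (w : U) (k : ℕ), k < nf w → ‖(fun y => f.eval y)^[k] (w:ℂ)‖ ≤ Ru + 2 := by
    intro w k hk
    have := Nat.find_min (hex w) hk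
    linarith [not_lt.mp this]
  set V : U → Set ℂ := fun w =>
    ((fun y : ℂ => ‖(fun x => f.eval x)^[nf w] y‖) ⁻¹' Ioi (Ru + 2)) ∩
      ⋂ k ∈ Finset.range (nf w), (fun y : ℂ => ‖(fun x => f.eval x)^[k] y‖) ⁻¹' Iio (Ru + 3)
    with hV
  have hVopen : ∀ w : U, IsOpen (V w) := by
    intro w
    exact ((isOpen_Ioi.preimage (hcont _)).inter
      (isOpen_biInter_finset fun k _ => isOpen_Iio.preimage (hcont _)))
  have hVmem : ∀ w : U, (w:ℂ) ∈ V w := by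
    intro w
    refine ⟨hn1 w, ?_⟩
    simp only [Set.mem_iInter, Finset.mem_range, Set.mem_preimage, Set.mem_Iio]
    intro k hk
    exact lt_of_le_of_lt (hn2 w k hk) (by linarith)
  have hcover : U ⊆ ⋃ w : U, V w := fun x hx => Set.mem_iUnion.mpr ⟨⟨x, hx⟩, hVmem ⟨x, hx⟩⟩
  obtain ⟨t, ht⟩ := hUc.elim_finite_subcover V hVopen hcover
  set NN : ℕ := t.sup nf with hNN
  obtain ⟨d2, hd2, H2⟩ := iter_compare d f hfd NN (Ru + 3) (by linarith) 1 one_pos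
  refine ⟨min d'₀ d2, lt_min hd'₀ hd2, min_le_left _ _, ?_⟩
  intro g hg hc z hz
  have hcd0 : ∀ i ≤ d, ‖f.coeff i - g.coeff i‖ < d'₀ :=
    fun i hi => lt_of_lt_of_le (hc i hi) (min_le_left _ _)
  have hcd2 : ∀ i ≤ d, ‖f.coeff i - g.coeff i‖ < d2 :=
    fun i hi => lt_of_lt_of_le (hc i hi) (min_le_right _ _)
  have hgrowg := hgrowAll g hg hcd0
  have hzRu : ‖z‖ ≤ Ru := julia_bound g Ru hRu hgrowg z hz
  by_contra hcon
  push_neg at hcon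
  have hinf : η ≤ infDist z (filledJulia f) := by
    by_contra h
    obtain ⟨y, hy1, hy2⟩ := (infDist_lt_iff hne).mp (lt_of_not_ge h)
    exact absurd hy2 (not_lt.mpr (hcon y hy1))
  have hzU : z ∈ U := ⟨by rwa [mem_closedBall, dist_zero_right], hinf⟩
  obtain ⟨w, hwV⟩ := Set.mem_iUnion.mp (ht hzU)
  obtain ⟨hwt, hzV⟩ := Set.mem_iUnion.mp hwV
  obtain ⟨hzV1, hzV2⟩ := hzV
  simp only [Set.mem_iInter, Finset.mem_range, Set.mem_preimage, Set.mem_Iio] at hzV2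
  rw [Set.mem_preimage, Set.mem_Ioi] at hzV1
  have hnle : nf w ≤ NN := Finset.le_sup hwt
  have hcomp := H2 g (le_of_eq hg) hcd2 z (nf w) hnle
    (fun k hk => Or.inl (le_of_lt (hzV2 k hk)))
  have hgn : Ru ≤ ‖(fun y => g.eval y)^[nf w] z‖ := by
    have := norm_sub_norm_le ((fun y => f.eval y)^[nf w] z) ((fun y => g.eval y)^[nf w] z)
    linarith
  exact notMem_julia g Ru hRu hgrowg z (nf w) hgn hz

open Polynomial in
/-- The filled Julia set of a polynomial of degree at least two is nonempty: it contains a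
fixed point. -/
lemma julia_nonempty (d : ℕ) (hd : 2 ≤ d) (f : Polynomial ℂ) (hdeg : f.natDegree = d) :
    (filledJulia f).Nonempty := by
  have h1 : (f - X).natDegree = d := by
    rw [natDegree_sub_eq_left_of_natDegree_lt, hdeg]
    rw [natDegree_X, hdeg]; omega
  have h2 : 0 < (f - X).degree := natDegree_pos_iff_degree_pos.mp (by omega)
  obtain ⟨z₀, hz₀⟩ := Complex.exists_root h2
  rw [IsRoot, eval_sub, eval_X, sub_eq_zero] at hz₀
  refine ⟨z₀, ?_⟩
  rw [filledJulia, Set.mem_setOf_eq]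
  apply (Bornology.isBounded_singleton (x := z₀)).subset
  rintro - ⟨n, rfl⟩
  simp only [Set.mem_singleton_iff]
  exact Function.iterate_fixed (f := fun w => f.eval w) hz₀ n

/-- If `f` is a polynomial of degree `d ≥ 2` whose filled Julia set has empty interior and
which satisfies the Exponential Shrinking of components condition, then there is `δ > 0` such
that for every `0 < r < δ` there are `N > 0` and `d' > 0` such that for every polynomial `g`
of degree `d` with coefficients `d'`-close to those of `f` and every `z` in the filled Julia
set of `g`, every connected component of `g^{-N}(B(z,δ))` has diameter less than `r`. -/
theorem expShrink_stable
    (d : ℕ) (hd : 2 ≤ d) (f : Polynomial ℂ) (hdeg : f.natDegree = d)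
    (hint : interior (filledJulia f) = ∅)
    (r₀ lam₀ : ℝ) (hr₀ : 0 < r₀) (hlam₀ : 1 < lam₀)
    (hES : ∀ z ∈ filledJulia f, ∀ n : ℕ,
      ∀ w ∈ (fun y => f.eval y)^[n] ⁻¹' Metric.ball z r₀,
        Metric.diam
          (connectedComponentIn ((fun y => f.eval y)^[n] ⁻¹' Metric.ball z r₀) w)
          < lam₀ ^ (-(n:ℤ))) :
    ∃ δ > (0:ℝ), ∀ r : ℝ, 0 < r → r < δ →
      ∃ N : ℕ, 0 < N ∧ ∃ d' > (0:ℝ),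
        ∀ g : Polynomial ℂ, g.natDegree = d →
          (∀ i ≤ d, ‖f.coeff i - g.coeff i‖ < d') →
          ∀ z ∈ filledJulia g,
            ∀ w ∈ (fun y => g.eval y)^[N] ⁻¹' Metric.ball z δ,
              Metric.diam
                (connectedComponentIn ((fun y => g.eval y)^[N] ⁻¹' Metric.ball z δ) w)
                < r := by
  obtain ⟨Ru, hRu, hesc⟩ := exists_escape d hd f hdeg
  have hf0 : f ≠ 0 := by
    intro h; rw [h, Polynomial.natDegree_zero] at hdeg; omega
  have hapos : (0:ℝ) < ‖f.coeff d‖ := by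
    rw [← hdeg]; exact norm_pos_iff.mpr (Polynomial.leadingCoeff_ne_zero.mpr hf0)
  have hd'₀ : 0 < min 1 (‖f.coeff d‖ / 2) := lt_min one_pos (by linarith)
  have hgrowf : ∀ w : ℂ, Ru ≤ ‖w‖ → 2 * ‖w‖ ≤ ‖f.eval w‖ :=
    hesc f hdeg (fun i _ => by simpa using hd'₀)
  have hne := julia_nonempty d hd f hdeg
  have hδpos : 0 < min 1 (r₀ / 4) := lt_min one_pos (by linarith)
  set δ : ℝ := min 1 (r₀ / 4) with hδdef
  refine ⟨δ, hδpos, ?_⟩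
  intro r hr hrδ
  have hlam0 : 0 < lam₀ := lt_trans one_pos hlam₀
  have hinv : 1 / lam₀ < 1 := by rw [div_lt_one hlam0]; exact hlam₀
  obtain ⟨n, hn⟩ := exists_pow_lt_of_lt_one hr hinv
  have hlamN : lam₀ ^ (-((n + 1 : ℕ):ℤ)) < r := by
    rw [zpow_neg, zpow_natCast]
    have h1 : lam₀ ^ n ≤ lam₀ ^ (n + 1) := pow_le_pow_right₀ (le_of_lt hlam₀) (Nat.le_succ n)
    have hpn : 0 < lam₀ ^ n := pow_pos hlam0 n
    have h2 : (lam₀ ^ (n + 1))⁻¹ ≤ (lam₀ ^ n)⁻¹ := inv_anti₀ hpn h1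
    rw [one_div, inv_pow] at hn
    linarith
  set N : ℕ := n + 1 with hNdef
  obtain ⟨dS, hdS, hdS0, HS⟩ := julia_semicontinuous d f (le_of_eq hdeg) Ru hRu
    (min 1 (‖f.coeff d‖ / 2)) hd'₀ (fun g hg hcg => hesc g hg hcg) hne (r₀/4) (by linarith)
  obtain ⟨dI, hdI, HI⟩ := iter_compare d f (le_of_eq hdeg) N (Ru + 1) (by linarith)
    (r₀/4) (by linarith)
  refine ⟨N, Nat.succ_pos n, min dS dI, lt_min hdS hdI, ?_⟩
  intro g hg hc z hz w hw
  have hcS : ∀ i ≤ d, ‖f.coeff i - g.coeff i‖ < dS :=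
    fun i hi => lt_of_lt_of_le (hc i hi) (min_le_left _ _)
  have hcI : ∀ i ≤ d, ‖f.coeff i - g.coeff i‖ < dI :=
    fun i hi => lt_of_lt_of_le (hc i hi) (min_le_right _ _)
  have hcd0 : ∀ i ≤ d, ‖f.coeff i - g.coeff i‖ < min 1 (‖f.coeff d‖ / 2) :=
    fun i hi => lt_of_lt_of_le (hcS i hi) hdS0
  have hgrowg := hesc g hg hcd0
  have hzRu : ‖z‖ ≤ Ru := julia_bound g Ru hRu hgrowg z hz
  obtain ⟨z'', hz''K, hz''d⟩ := HS g hg hcS z hz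
  have hz''Ru : ‖z''‖ ≤ Ru := julia_bound f Ru hRu hgrowf z'' hz''K
  have hSfb : Bornology.IsBounded ((fun y => f.eval y)^[N] ⁻¹' ball z'' r₀) := by
    apply (isBounded_closedBall (x := (0:ℂ)) (r := Ru + r₀)).subset
    intro y hy
    rw [mem_closedBall, dist_zero_right]
    by_contra hcon
    push_neg at hcon
    have hyRu : Ru ≤ ‖y‖ := by linarith
    have h2 := grow_iter f Ru hgrowf y hyRu N
    have h3 : (1:ℝ) ≤ 2 ^ N := one_le_pow₀ (by norm_num)
    rw [Set.mem_preimage, mem_ball, dist_eq_norm] at hy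
    have h4 := norm_sub_norm_le ((fun y => f.eval y)^[N] y) z''
    nlinarith [norm_nonneg y]
  have hδ1 : δ ≤ 1 := min_le_left _ _
  have hδ4 : δ ≤ r₀ / 4 := min_le_right _ _
  have hsub : connectedComponentIn ((fun y => g.eval y)^[N] ⁻¹' ball z δ) w ⊆
      (fun y => f.eval y)^[N] ⁻¹' ball z'' r₀ := by
    intro y hy
    have hySg : y ∈ (fun y => g.eval y)^[N] ⁻¹' ball z δ :=
      connectedComponentIn_subset _ _ hy
    rw [Set.mem_preimage] at hySg
    have hbd := pre_bound g Ru hRu hgrowg z hzRu δ N y hySg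
    have hcomp := HI g (le_of_eq hg) hcI y N le_rfl
      (fun k hk => Or.inr (le_trans (hbd k (le_of_lt hk)) (by linarith)))
    rw [Set.mem_preimage, mem_ball]
    have hgz : dist ((fun y => g.eval y)^[N] y) z < δ := mem_ball.mp hySg
    have h1 : dist ((fun y => f.eval y)^[N] y) ((fun y => g.eval y)^[N] y) < r₀/4 := by
      rw [dist_eq_norm]; exact hcomp
    calc dist ((fun y => f.eval y)^[N] y) z''
        ≤ dist ((fun y => f.eval y)^[N] y) ((fun y => g.eval y)^[N] y)
          + dist ((fun y => g.eval y)^[N] y) z + dist z z'' := dist_triangle4 _ _ _ _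
      _ < r₀/4 + δ + r₀/4 := by linarith
      _ ≤ r₀ := by linarith
  have hwmem : w ∈ connectedComponentIn ((fun y => g.eval y)^[N] ⁻¹' ball z δ) w :=
    mem_connectedComponentIn hw
  have hwSf := hsub hwmem
  have hCsub : connectedComponentIn ((fun y => g.eval y)^[N] ⁻¹' ball z δ) w ⊆
      connectedComponentIn ((fun y => f.eval y)^[N] ⁻¹' ball z'' r₀) w :=
    isPreconnected_connectedComponentIn.subset_connectedComponentIn hwmem hsub
  calc Metric.diam (connectedComponentIn ((fun y => g.eval y)^[N] ⁻¹' ball z δ) w)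
      ≤ Metric.diam (connectedComponentIn ((fun y => f.eval y)^[N] ⁻¹' ball z'' r₀) w) :=
        diam_mono hCsub (hSfb.subset (connectedComponentIn_subset _ _))
    _ < lam₀ ^ (-(N:ℤ)) := hES z'' hz''K N w hwSf
    _ < r := hlamN
end
end

section
/- Let z ∈ ℂ, R > 0, let h : B(z,2R) → ℂ be analytic and injective, and let U be a connected open set with z ∈ U, U ⊆ B(z,2R) and diam U ≤ R. If sup_{x,y ∈ B(z,2R)} |h'(x)/h'(y)| ≤ D, then diam U ≤ D·|h'(z)|^{-1}·diam h(U); equivalently, |h'(z)|·diam U ≤ D·diam h(U). -/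
/-!
Where `‖h'‖ ≥ m > 0`, the inverse function theorem makes `h` locally co-Lipschitz with any
constant `C > 1/m`: every point near `h w` has a preimage within `C` times its distance from
`h w`. Lifting the segment from `h x` to `h y` by continuous induction produces a preimage of
`h y` within `C ‖h x - h y‖` of `x`; while this stays inside the domain, injectivity identifies it
with `y`, so `m ‖x - y‖ ≤ ‖h x - h y‖`. The distortion bound gives `m = ‖h' z‖ / D` on the whole
disc, and `U ⊆ closedBall z R` keeps all the lifts between points of `U` inside `B(z, 2R)`.
-/

open Set Metric Filter Topology NNReal

variable {X Y : Type*} [PseudoMetricSpace X]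

def CoLipschitzAt [PseudoMetricSpace Y] (C : ℝ≥0) (f : X → Y) (x : X) : Prop :=
  ∀ᶠ y in 𝓝 (f x), ∃ x', f x' = y ∧ dist x' x ≤ C * dist y (f x)

theorem isCompact_setOf_lift [ProperSpace X] [MetricSpace Y] {f : X → Y} {γ : ℝ → Y}
    (hγ : Continuous γ) {x : X} {r : ℝ} (hf : ContinuousOn f (closedBall x r)) :
    IsCompact {p ∈ Icc 0 1 ×ˢ closedBall x r | f p.2 = γ p.1 ∧ dist p.2 x ≤ r * p.1} := by
  refine (isCompact_Icc.prod (isCompact_closedBall x r)).of_isClosed_subset ?_ fun p hp ↦ hp.1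
  have hgraph : IsClosed (Icc 0 1 ×ˢ closedBall x r ∩
      (fun p : ℝ × X ↦ (f p.2, γ p.1)) ⁻¹' diagonal Y) :=
    ContinuousOn.preimage_isClosed_of_isClosed
      ((hf.comp continuousOn_snd fun p hp ↦ hp.2).prodMk (hγ.comp continuous_fst).continuousOn)
      (isClosed_Icc.prod isClosed_closedBall) isClosed_diagonal
  convert hgraph.inter (isClosed_le (f := fun p : ℝ × X ↦ dist p.2 x) (g := fun p ↦ r * p.1)
    (by fun_prop) (by fun_prop)) using 1
  ext p
  exact and_assoc.symm

theorem LipschitzWith.exists_lift_of_coLipschitzAt [ProperSpace X] [MetricSpace Y] {f : X → Y}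
    {γ : ℝ → Y} {K C : ℝ≥0} (hγ : LipschitzWith K γ) {x : X} (hx : f x = γ 0)
    (hf : ContinuousOn f (closedBall x (C * K)))
    (hco : ∀ w ∈ closedBall x (C * K), CoLipschitzAt C f w) :
    ∃ w, f w = γ 1 ∧ dist w x ≤ C * K := by
  set r : ℝ := C * K
  have hr : 0 ≤ r := by positivity
  set S := {p ∈ Icc 0 1 ×ˢ closedBall x r | f p.2 = γ p.1 ∧ dist p.2 x ≤ r * p.1}
  suffices Icc 0 1 ⊆ Prod.fst '' S by
    obtain ⟨⟨_, w⟩, ⟨-, hw, hwx⟩, rfl⟩ := this (right_mem_Icc.2 zero_le_one)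
    exact ⟨w, hw, by simpa using hwx⟩
  refine IsClosed.Icc_subset_of_forall_mem_nhdsWithin
    (((isCompact_setOf_lift hγ.continuous hf).image continuous_fst).isClosed.inter isClosed_Icc)
    ⟨(0, x), by simp [S, hx, hr], rfl⟩ ?_
  rintro _ ⟨⟨⟨t, w⟩, ⟨⟨ht, hw⟩, hwt, hwx⟩, rfl⟩, -, ht1⟩
  have hlift : ∀ᶠ t' in 𝓝 t, ∃ w', f w' = γ t' ∧ dist w' w ≤ C * dist (γ t') (γ t) := by
    have hcow : CoLipschitzAt C f w := hco w hw
    rw [CoLipschitzAt, hwt] at hcow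
    exact (hγ.continuous.tendsto t).eventually hcow
  filter_upwards [nhdsWithin_le_nhds (hlift.and (Iio_mem_nhds ht1)), self_mem_nhdsWithin]
    with t' ⟨⟨w', hw't', hw'w⟩, ht'1⟩ htt'
  have hw'x : dist w' x ≤ r * t' := calc
    dist w' x ≤ dist w' w + dist w x := dist_triangle _ _ _
    _ ≤ C * (K * dist t' t) + r * t := by
      gcongr
      exact hw'w.trans (by gcongr; exact hγ.dist_le_mul t' t)
    _ = r * t' := by
      rw [Real.dist_eq, abs_of_pos (sub_pos.2 htt')]
      ring
  refine ⟨(t', w'), ⟨⟨⟨ht.1.trans htt'.le, ht'1.le⟩, ?_⟩, hw't', hw'x⟩, rfl⟩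
  exact mem_closedBall.2 (hw'x.trans (mul_le_of_le_one_right hr ht'1.le))

theorem HasStrictDerivAt.coLipschitzAt {𝕜 : Type*} [NontriviallyNormedField 𝕜] [CompleteSpace 𝕜]
    {f : 𝕜 → 𝕜} {f' a : 𝕜} {C : ℝ≥0} (hf : HasStrictDerivAt f f' a) (hf' : f' ≠ 0)
    (hC : ‖f'‖⁻¹ < C) : CoLipschitzAt C f a := by
  set g := hf.localInverse f f' a hf'
  have hga : g (f a) = a := (hf.eventually_left_inverse hf').self_of_nhds
  obtain ⟨s, hs, hg⟩ := hf.to_localInverse hf' |>.hasStrictFDerivAt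
    |>.exists_lipschitzOnWith_of_nnnorm_lt C (by simpa [← NNReal.coe_lt_coe] using hC)
  filter_upwards [hf.eventually_right_inverse hf', hs] with v hv hvs
  exact ⟨g v, hv, by simpa [hga] using hg.dist_le_mul v hvs (f a) (mem_of_mem_nhds hs)⟩

theorem exists_deriv_ne_zero_of_injOn {𝕜 E : Type*} [RCLike 𝕜]
    [NormedAddCommGroup E] [NormedSpace 𝕜 E] {f : 𝕜 → E} {s : Set 𝕜} (hs : IsOpen s)
    (hs' : IsPreconnected s) (hnt : s.Nontrivial) (hf : DifferentiableOn 𝕜 f s)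
    (hinj : InjOn f s) : ∃ w ∈ s, deriv f w ≠ 0 := by
  by_contra! hzero
  obtain ⟨a, ha, b, hb, hab⟩ := hnt
  exact hab (hinj ha hb (hs.is_const_of_deriv_eq_zero hs' hf hzero ha hb))

theorem mul_diam_le_diam_image [PseudoMetricSpace Y] {f : X → Y} {s : Set X} {c : ℝ}
    (hbdd : Bornology.IsBounded (f '' s)) (hf : ∀ x ∈ s, ∀ y ∈ s, c * dist x y ≤ dist (f x) (f y)) :
    c * diam s ≤ diam (f '' s) := by
  rcases le_or_gt c 0 with hc | hc
  · exact (mul_nonpos_of_nonpos_of_nonneg hc diam_nonneg).trans diam_nonneg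
  rw [← le_div_iff₀' hc]
  refine diam_le_of_forall_dist_le (by positivity) fun x hx y hy ↦ ?_
  rw [le_div_iff₀' hc]
  exact (hf x hx y hy).trans (dist_le_diam_of_mem hbdd (mem_image_of_mem f hx) (mem_image_of_mem f hy))

theorem mul_dist_le_dist_of_le_norm_deriv {s : Set ℂ} {h : ℂ → ℂ} {m : ℝ} {x y : ℂ}
    (hh : DifferentiableOn ℂ h s) (hinj : InjOn h s) (hm : ∀ w ∈ s, m ≤ ‖deriv h w‖)
    (hy : y ∈ s) (hxy : ball x (dist x y) ⊆ s) : m * dist x y ≤ dist (h x) (h y) := by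
  by_contra! hlt
  set d := dist (h x) (h y)
  have hd : 0 ≤ d := dist_nonneg
  have hm0 : 0 < m := pos_of_mul_pos_left (hd.trans_lt hlt) dist_nonneg
  have hxy0 : 0 < dist x y := pos_of_mul_pos_right (hd.trans_lt hlt) hm0.le
  -- any `C` strictly between `1 / m` and `dist x y / d` will do
  obtain ⟨C, hCm, hCd⟩ : ∃ C : ℝ≥0, m⁻¹ < C ∧ C * d < dist x y := by
    refine ⟨(2 * dist x y / (d + m * dist x y)).toNNReal, ?_, ?_⟩ <;>
      rw [Real.coe_toNNReal _ (by positivity)]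
    · rw [inv_lt_iff_one_lt_mul₀ hm0, div_mul_eq_mul_div, one_lt_div (by positivity)]
      linarith
    · rw [div_mul_eq_mul_div, div_lt_iff₀ (by positivity)]
      nlinarith
  have hball : closedBall x (C * nndist (h x) (h y)) ⊆ ball x (dist x y) :=
    closedBall_subset_ball hCd
  have hco : ∀ w ∈ closedBall x (C * nndist (h x) (h y)), CoLipschitzAt C h w := by
    intro w hw
    have hws : s ∈ 𝓝 w := mem_of_superset (isOpen_ball.mem_nhds (hball hw)) hxy
    have hmw : m ≤ ‖deriv h w‖ := hm w (mem_of_mem_nhds hws)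
    exact (hh.analyticAt hws).hasStrictDerivAt.coLipschitzAt
      (norm_pos_iff.1 (hm0.trans_le hmw)) ((inv_anti₀ hm0 hmw).trans_lt hCm)
  obtain ⟨w, hwy, hwx⟩ := (lipschitzWith_lineMap (h x) (h y)).exists_lift_of_coLipschitzAt
    (by simp) (hh.continuousOn.mono (hball.trans hxy)) hco
  obtain rfl : w = y := hinj (hxy (hball (mem_closedBall.2 hwx))) hy (by simpa using hwy)
  rw [dist_comm] at hwx
  exact (hwx.trans_lt hCd).false

theorem diam_le_of_bounded_distortion_general
    (z : ℂ) (R : ℝ) (hR : 0 < R) (h : ℂ → ℂ) (D : ℝ)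
    (hana : DifferentiableOn ℂ h (Metric.ball z (2 * R)))
    (hinj : Set.InjOn h (Metric.ball z (2 * R)))
    (U : Set ℂ) (hzU : z ∈ U)
    (hUsub : U ⊆ Metric.ball z (2 * R)) (hUdiam : Metric.diam U ≤ R)
    (hdist : ∀ x ∈ Metric.ball z (2 * R), ∀ y ∈ Metric.ball z (2 * R),
      ‖deriv h x‖ ≤ D * ‖deriv h y‖) :
    ‖deriv h z‖ * Metric.diam U ≤ D * Metric.diam (h '' U) := by
  have hzball : z ∈ ball z (2 * R) := mem_ball_self (by positivity)
  obtain ⟨w, hw, hw0⟩ := exists_deriv_ne_zero_of_injOn isOpen_ball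
    (convex_ball z _).isPreconnected (infinite_of_mem_nhds z (isOpen_ball.mem_nhds hzball)).nontrivial
    hana hinj
  have hD : 0 < D :=
    pos_of_mul_pos_left ((norm_pos_iff.2 hw0).trans_le (hdist w hw w hw)) (norm_nonneg _)
  have hUbdd : Bornology.IsBounded U := isBounded_ball.subset hUsub
  have hUball : U ⊆ closedBall z R := fun u hu ↦
    (dist_le_diam_of_mem hUbdd hu hzU).trans hUdiam
  have hlower : ∀ w ∈ ball z (2 * R), ‖deriv h z‖ / D ≤ ‖deriv h w‖ := fun w hw ↦
    (div_le_iff₀' hD).2 (hdist z hzball w hw)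
  have hbdd : Bornology.IsBounded (h '' U) :=
    ((isCompact_closedBall z R).image_of_continuousOn (hana.continuousOn.mono
      (closedBall_subset_ball (by linarith)))).isBounded.subset (image_mono hUball)
  have key : ‖deriv h z‖ / D * diam U ≤ diam (h '' U) := by
    refine mul_diam_le_diam_image hbdd fun x hx y hy ↦ ?_
    refine mul_dist_le_dist_of_le_norm_deriv hana hinj hlower (hUsub hy) (ball_subset_ball' ?_)
    linarith [(dist_le_diam_of_mem hUbdd hx hy).trans hUdiam, mem_closedBall.1 (hUball hx)]
  calc ‖deriv h z‖ * diam U = D * (‖deriv h z‖ / D * diam U) := by field_simp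
    _ ≤ D * diam (h '' U) := by gcongr

/-- Koebe-type distortion estimate: if `h` is analytic and injective on `B(z,2R)` with
distortion bounded by `D`, and `U ∋ z` is a connected open set of diameter at most `R`
inside `B(z,2R)`, then `diam U ≤ D |h'(z)|⁻¹ diam (h U)`, i.e.
`|h'(z)| · diam U ≤ D · diam (h U)`. -/
theorem diam_le_of_bounded_distortion
    (z : ℂ) (R : ℝ) (hR : 0 < R) (h : ℂ → ℂ) (D : ℝ)
    (hana : DifferentiableOn ℂ h (Metric.ball z (2 * R)))
    (hinj : Set.InjOn h (Metric.ball z (2 * R)))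
    (U : Set ℂ) (hUopen : IsOpen U) (hUconn : IsPreconnected U) (hzU : z ∈ U)
    (hUsub : U ⊆ Metric.ball z (2 * R)) (hUdiam : Metric.diam U ≤ R)
    (hdist : ∀ x ∈ Metric.ball z (2 * R), ∀ y ∈ Metric.ball z (2 * R),
      ‖deriv h x‖ ≤ D * ‖deriv h y‖) :
    ‖deriv h z‖ * Metric.diam U ≤ D * Metric.diam (h '' U) :=
  diam_le_of_bounded_distortion_general z R hR h D hana hinj U hzU hUsub hUdiam hdist
end
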